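/- arXiv:2312.16906 — 10 statements merged into one kernel-verified Lean document; each statement's English description precedes it below -/
import Mathlib

section
/- For every integer N ≥ 1, every real number q > 1, and every real number X such that 1 - (-q)^{-(N-k)} X ≠ 0 for all 0 ≤ k ≤ N-1, one has ∑_{k=0}^{N-1} (-1)^k (-q)^{-k(k-1)/2} / [ (1 - (-q)^{-(N-k)} X) · ∏_{l=1}^{N-k-1}(1 - (-q)^{-l}) · ∏_{l=1}^{k}(1 - (-q)^{-l}) ] = (-1)^{N-1} (-q)^{-N(N-1)/2} X^{N-1} / ∏_{l=1}^{N}(1 - (-q)^{-l} X). -/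
/-!
With `t = (-q)⁻¹` the products are the q-Pochhammer symbols `(t; t)_k` and `(tX; t)_N`, and
indexing the sum by the antidiagonal `k + j = n` (`n = N - 1`, `j = N - k - 1`) it becomes
`S_n(X) = ∑_{k+j=n} (-1)^k t^(k choose 2) / ((1 - t^(j+1) X) (t; t)_j (t; t)_k)`.
On the antidiagonal `k + j = n + 1` one has `1 - t^(n+1) = (1 - t^j) + t^j (1 - t^k)`, and the two
factors cancel against `(t; t)_j` and `(t; t)_k` respectively. This gives the recurrence
`(1 - t^(n+1)) S_(n+1)(X) = S_n(tX) - t^n S_n(X)`, which the right-hand side satisfies as well;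
both sides agree for `n = 0`.
-/

open Finset

theorem Int.natCast_choose_two (k : ℕ) : ((k.choose 2 : ℕ) : ℤ) = k * (k - 1) / 2 := by
  rcases k with _ | k
  · rfl
  · rw [Nat.choose_two_right, Int.natCast_div]
    push_cast
    ring_nf

theorem one_sub_pow_ne_zero_of_abs_lt_one {R : Type*} [Ring R] [LinearOrder R]
    [IsStrictOrderedRing R] {t : R} (ht : |t| < 1) {m : ℕ} (hm : m ≠ 0) : 1 - t ^ m ≠ 0 :=
  fun h => (pow_lt_one₀ (abs_nonneg t) ht hm).ne <| by
    rw [← abs_pow, ← sub_eq_zero.mp h, abs_one]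

section QPochhammer

variable {R : Type*} [CommRing R]

def qPochhammer (a t : R) (n : ℕ) : R :=
  ∏ i ∈ range n, (1 - a * t ^ i)

theorem qPochhammer_succ (a t : R) (n : ℕ) :
    qPochhammer a t (n + 1) = qPochhammer a t n * (1 - a * t ^ n) :=
  prod_range_succ _ n

theorem qPochhammer_succ' (a t : R) (n : ℕ) :
    qPochhammer a t (n + 1) = (1 - a) * qPochhammer (a * t) t n := by
  rw [qPochhammer, qPochhammer, prod_range_succ', mul_comm]
  simp only [pow_zero, mul_one, pow_succ, mul_assoc, mul_comm t]

theorem qPochhammer_mul_eq_prod_Icc (t X : R) (n : ℕ) :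
    qPochhammer (t * X) t n = ∏ l ∈ Icc 1 n, (1 - t ^ l * X) := by
  induction n with
  | zero => rfl
  | succ n ih =>
    rw [qPochhammer_succ, ih, prod_Icc_succ_top (by omega), pow_succ']
    ring

theorem qPochhammer_self_eq_prod_Icc (t : R) (n : ℕ) :
    qPochhammer t t n = ∏ l ∈ Icc 1 n, (1 - t ^ l) := by
  simpa using qPochhammer_mul_eq_prod_Icc t 1 n

theorem qPochhammer_ne_zero [NoZeroDivisors R] [Nontrivial R] {a t : R} {n : ℕ}
    (h : ∀ i < n, 1 - a * t ^ i ≠ 0) :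
    qPochhammer a t n ≠ 0 :=
  prod_ne_zero_iff.mpr fun i hi => h i (mem_range.mp hi)

end QPochhammer

namespace QPartialFraction

variable {K : Type*} [Field K] (t X : K)

def term (k j : ℕ) : K :=
  (-1) ^ k * t ^ k.choose 2 /
    ((1 - t ^ (j + 1) * X) * qPochhammer t t j * qPochhammer t t k)

def closedForm (n : ℕ) : K :=
  (-1) ^ n * t ^ (n + 1).choose 2 * X ^ n / qPochhammer (t * X) t (n + 1)

variable {t}

theorem one_sub_pow_mul_term_succ_right {j : ℕ} (hj : 1 - t ^ (j + 1) ≠ 0) (k : ℕ) :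
    (1 - t ^ (j + 1)) * term t X k (j + 1) = term t (t * X) k j := by
  have hden : (1 - t ^ (j + 1 + 1) * X) * qPochhammer t t (j + 1) * qPochhammer t t k =
      (1 - t ^ (j + 1) * (t * X)) * qPochhammer t t j * qPochhammer t t k * (1 - t ^ (j + 1)) := by
    rw [qPochhammer_succ, pow_succ' t (j + 1)]
    ring
  rw [term, term, hden, mul_div_assoc', mul_comm (1 - t ^ (j + 1)), mul_div_mul_right _ _ hj]

theorem pow_mul_one_sub_pow_mul_term_succ_left {k : ℕ} (hk : 1 - t ^ (k + 1) ≠ 0) (j : ℕ) :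
    t ^ j * (1 - t ^ (k + 1)) * term t X (k + 1) j = -(t ^ (k + j) * term t X k j) := by
  have hden : (1 - t ^ (j + 1) * X) * qPochhammer t t j * qPochhammer t t (k + 1) =
      (1 - t ^ (j + 1) * X) * qPochhammer t t j * qPochhammer t t k * (1 - t ^ (k + 1)) := by
    rw [qPochhammer_succ, pow_succ' t k]
    ring
  rw [term, term, hden, ← mul_div_assoc, mul_right_comm _ (1 - t ^ (k + 1)),
    mul_div_mul_right _ _ hk, Nat.choose_succ_succ', Nat.choose_one_right]
  ring

theorem one_sub_pow_mul_sum_term_succ {n : ℕ} (ht : ∀ i ≤ n, 1 - t ^ (i + 1) ≠ 0) :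
    (1 - t ^ (n + 1)) * ∑ p ∈ antidiagonal (n + 1), term t X p.1 p.2 =
      ∑ p ∈ antidiagonal n, term t (t * X) p.1 p.2 -
        t ^ n * ∑ p ∈ antidiagonal n, term t X p.1 p.2 := by
  have hsplit : (1 - t ^ (n + 1)) * ∑ p ∈ antidiagonal (n + 1), term t X p.1 p.2 =
      ∑ p ∈ antidiagonal (n + 1), (1 - t ^ p.2) * term t X p.1 p.2 +
        ∑ p ∈ antidiagonal (n + 1), t ^ p.2 * (1 - t ^ p.1) * term t X p.1 p.2 := by
    rw [mul_sum, ← sum_add_distrib]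
    refine sum_congr rfl fun p hp => ?_
    rw [← mem_antidiagonal.mp hp, pow_add]
    ring
  rw [hsplit, Nat.sum_antidiagonal_succ', Nat.sum_antidiagonal_succ]
  simp only [pow_zero, sub_self, zero_mul, mul_zero, zero_add]
  rw [mul_sum, sub_eq_add_neg, ← sum_neg_distrib]
  congr 1 <;> refine sum_congr rfl fun p hp => ?_
  · exact one_sub_pow_mul_term_succ_right X (ht _ (HasAntidiagonal.antidiagonal.snd_le hp)) _
  · rw [pow_mul_one_sub_pow_mul_term_succ_left X (ht _ (HasAntidiagonal.antidiagonal.fst_le hp)),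
      mem_antidiagonal.mp hp]

theorem closedForm_sub_pow_mul_closedForm {n : ℕ}
    (hX : ∀ i ≤ n + 1, 1 - t ^ (i + 1) * X ≠ 0) :
    closedForm t (t * X) n - t ^ n * closedForm t X n =
      (1 - t ^ (n + 1)) * closedForm t X (n + 1) := by
  have hfirst : 1 - t * X ≠ 0 := by simpa using hX 0 (Nat.zero_le _)
  have hlast : 1 - t * X * t * t ^ n ≠ 0 := by
    convert hX (n + 1) le_rfl using 2; ring
  have hmiddle : qPochhammer (t * X * t) t n ≠ 0 :=
    qPochhammer_ne_zero fun i hi => by convert hX (i + 1) (by omega) using 2; ring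
  rw [closedForm, closedForm, closedForm, show t * (t * X) = t * X * t by ring,
    qPochhammer_succ' (t * X) t (n + 1), qPochhammer_succ' (t * X) t n,
    qPochhammer_succ (t * X * t) t n, Nat.choose_succ_succ' (n + 1), Nat.choose_one_right]
  rw [mul_div_assoc', mul_div_assoc', div_sub_div _ _ (mul_ne_zero hmiddle hlast)
    (mul_ne_zero hfirst hmiddle), div_eq_div_iff (by positivity) (by positivity)]
  ring

theorem sum_antidiagonal_term {n : ℕ} (ht : ∀ i < n, 1 - t ^ (i + 1) ≠ 0)
    (hX : ∀ i ≤ n, 1 - t ^ (i + 1) * X ≠ 0) :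
    ∑ p ∈ antidiagonal n, term t X p.1 p.2 = closedForm t X n := by
  induction n generalizing X with
  | zero => simp [term, closedForm, qPochhammer]
  | succ n ih =>
    apply mul_left_cancel₀ (ht n n.lt_succ_self)
    rw [one_sub_pow_mul_sum_term_succ X (fun i hi => ht i (by omega)),
      ih (t * X) (fun i hi => ht i (by omega)) ?_, ih X (fun i hi => ht i (by omega))
        (fun i hi => hX i (by omega)), closedForm_sub_pow_mul_closedForm X hX]
    intro i hi
    convert hX (i + 1) (by omega) using 2
    ring

end QPartialFraction

/-- Identity (5.23): a partial-fraction/Vandermonde-type identity. -/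
theorem stmt_0 (N : ℕ) (hN : 1 ≤ N) (q : ℝ) (hq : 1 < q) (X : ℝ)
    (hX : ∀ k < N, 1 - (-q) ^ (-((N : ℤ) - (k : ℤ))) * X ≠ 0) :
    ∑ k ∈ Finset.range N,
      (-1 : ℝ) ^ k * (-q) ^ (-((k : ℤ) * ((k : ℤ) - 1) / 2)) /
        ((1 - (-q) ^ (-((N : ℤ) - (k : ℤ))) * X) *
          (∏ l ∈ Finset.Icc 1 (N - k - 1), (1 - (-q) ^ (-(l : ℤ)))) *
          (∏ l ∈ Finset.Icc 1 k, (1 - (-q) ^ (-(l : ℤ)))))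
    = (-1 : ℝ) ^ (N - 1) * (-q) ^ (-((N : ℤ) * ((N : ℤ) - 1) / 2)) * X ^ (N - 1) /
        ∏ l ∈ Finset.Icc 1 N, (1 - (-q) ^ (-(l : ℤ)) * X) := by
  obtain ⟨n, rfl⟩ : ∃ n, N = n + 1 := ⟨N - 1, by omega⟩
  set t : ℝ := (-q)⁻¹
  have hpow (m : ℕ) : (-q) ^ (-(m : ℤ)) = t ^ m := by rw [zpow_neg, zpow_natCast, inv_pow]
  have hchoose (k : ℕ) : (-q) ^ (-((k : ℤ) * ((k : ℤ) - 1) / 2)) = t ^ k.choose 2 := by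
    rw [← Int.natCast_choose_two, hpow]
  have hsub {k : ℕ} (hk : k ≤ n) :
      -(((n + 1 : ℕ) : ℤ) - k) = -((n - k + 1 : ℕ) : ℤ) := by
    push_cast
    omega
  have ht : |t| < 1 := by
    rw [abs_inv, abs_neg, abs_of_pos (by linarith)]
    exact inv_lt_one_of_one_lt₀ hq
  have key := QPartialFraction.sum_antidiagonal_term X (n := n)
    (fun i _ => one_sub_pow_ne_zero_of_abs_lt_one ht i.succ_ne_zero) fun i hi => by
    have h := hX (n - i) (by omega)
    rwa [hsub (Nat.sub_le n i), Nat.sub_sub_self hi, hpow] at h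
  rw [Nat.sum_antidiagonal_eq_sum_range_succ_mk] at key
  convert key using 1
  · refine sum_congr rfl fun k hk => ?_
    have hk : k ≤ n := Nat.lt_succ_iff.mp (mem_range.mp hk)
    rw [hsub hk, show n + 1 - k - 1 = n - k by omega, hchoose, hpow, QPartialFraction.term,
      qPochhammer_self_eq_prod_Icc, qPochhammer_self_eq_prod_Icc]
    simp only [hpow]
  · rw [QPartialFraction.closedForm, qPochhammer_mul_eq_prod_Icc, Nat.add_sub_cancel, hchoose]
    simp only [hpow]
end

section
/- Let q > 1 be a real number, and let c ≥ 1 and 0 ≤ k ≤ c be integers. Then ∑_{j=0}^{k} (-1)^j (-q)^{-j(j-1)/2} · ∏_{l=c-j+1}^{c}(1 - (-q)^{-l}) / ∏_{l=1}^{j}(1 - (-q)^{-l}) = (-1)^k (-q)^{-k(k+1)/2} · ∏_{l=c-k}^{c-1}(1 - (-q)^{-l}) / ∏_{l=1}^{k}(1 - (-q)^{-l}). In particular, taking k = c, the left-hand sum vanishes. -/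
lemma aux_ne (q : ℝ) (hq : 1 < q) (l : ℕ) (hl : 1 ≤ l) :
    1 - (-q) ^ (-(l : ℤ)) ≠ 0 := by
  have hq0 : 0 < q := by linarith
  have key : (-q) ^ (-(l : ℤ)) = ((-q) ^ l)⁻¹ := by
    rw [zpow_neg, zpow_natCast]
  have habs : |(-q) ^ (-(l : ℤ))| = (q ^ l)⁻¹ := by
    rw [key, abs_inv, abs_pow, abs_neg, abs_of_pos hq0]
  have h1 : (1 : ℝ) < q ^ l := one_lt_pow₀ hq (by omega)
  have hlt : (q ^ l)⁻¹ < 1 := inv_lt_one_of_one_lt₀ h1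
  intro h
  have h2 : (-q) ^ (-(l : ℤ)) = 1 := by linarith
  rw [h2] at habs
  simp at habs
  linarith

/-- Identity (5.15): a q-binomial-type identity. -/
theorem stmt_2 (q : ℝ) (hq : 1 < q) (c k : ℕ) (hc : 1 ≤ c) (hk : k ≤ c) :
    ∑ j ∈ Finset.range (k + 1),
      (-1 : ℝ) ^ j * (-q) ^ (-((j : ℤ) * ((j : ℤ) - 1) / 2)) *
        (∏ l ∈ Finset.Icc (c - j + 1) c, (1 - (-q) ^ (-(l : ℤ)))) /
        (∏ l ∈ Finset.Icc 1 j, (1 - (-q) ^ (-(l : ℤ))))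
    = (-1 : ℝ) ^ k * (-q) ^ (-((k : ℤ) * ((k : ℤ) + 1) / 2)) *
        (∏ l ∈ Finset.Icc (c - k) (c - 1), (1 - (-q) ^ (-(l : ℤ)))) /
        (∏ l ∈ Finset.Icc 1 k, (1 - (-q) ^ (-(l : ℤ)))) := by
  have ht : (-q) ≠ 0 := by intro h; nlinarith [neg_eq_zero.mp h]
  revert hk
  induction k with
  | zero =>
    intro _
    rw [Finset.sum_range_one]
    simp only [Nat.sub_zero, Nat.cast_zero]
    rw [Finset.Icc_eq_empty (by omega : ¬ c + 1 ≤ c),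
        Finset.Icc_eq_empty (by omega : ¬ c ≤ c - 1)]
    norm_num
  | succ k IH =>
    intro hk1
    have hk : k ≤ c := by omega
    rw [Finset.sum_range_succ, IH hk]
    -- rewrite bounds
    rw [show c - (k + 1) + 1 = c - k from by omega]
    -- split products
    have hn1 : c ∉ Finset.Icc (c - k) (c - 1) := by
      simp only [Finset.mem_Icc]; omega
    have hn2 : k + 1 ∉ Finset.Icc 1 k := by
      simp only [Finset.mem_Icc]; omega
    have hn3 : c - (k + 1) ∉ Finset.Icc (c - k) (c - 1) := by
      simp only [Finset.mem_Icc]; omega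
    have hIccP : Finset.Icc (c - k) c = insert c (Finset.Icc (c - k) (c - 1)) := by
      ext x; simp only [Finset.mem_Icc, Finset.mem_insert]; omega
    have hIccQ : Finset.Icc 1 (k + 1) = insert (k + 1) (Finset.Icc 1 k) := by
      ext x; simp only [Finset.mem_Icc, Finset.mem_insert]; omega
    have hIccP2 : Finset.Icc (c - (k + 1)) (c - 1)
        = insert (c - (k + 1)) (Finset.Icc (c - k) (c - 1)) := by
      ext x; simp only [Finset.mem_Icc, Finset.mem_insert]; omega
    rw [hIccP, hIccQ, hIccP2, Finset.prod_insert hn1, Finset.prod_insert hn2,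
        Finset.prod_insert hn3]
    push_cast
    -- exponent arithmetic
    have he1 : (-(((k : ℤ) + 1) * ((k : ℤ) + 1 - 1) / 2))
        = -((k : ℤ) * ((k : ℤ) + 1) / 2) := by
      have h : ((k : ℤ) + 1) * ((k : ℤ) + 1 - 1) = (k : ℤ) * ((k : ℤ) + 1) := by ring
      rw [h]
    have he2 : (-(((k : ℤ) + 1) * ((k : ℤ) + 1 + 1) / 2))
        = -((k : ℤ) * ((k : ℤ) + 1) / 2) + -((k : ℤ) + 1) := by
      have h : ((k : ℤ) + 1) * ((k : ℤ) + 1 + 1)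
          = (k : ℤ) * ((k : ℤ) + 1) + ((k : ℤ) + 1) * 2 := by ring
      rw [h, Int.add_mul_ediv_right _ _ (by norm_num : (2:ℤ) ≠ 0)]
      ring
    rw [he1, he2, zpow_add₀ ht]
    -- combine powers
    have hw : (-q) ^ (-((k : ℤ) + 1)) * (-q) ^ (-((c - (k + 1) : ℕ) : ℤ))
        = (-q) ^ (-(c : ℤ)) := by
      rw [← zpow_add₀ ht]
      congr 1
      omega
    -- nonvanishing
    have hQ : (∏ l ∈ Finset.Icc 1 k, (1 - (-q) ^ (-(l : ℤ)))) ≠ 0 :=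
      Finset.prod_ne_zero_iff.mpr fun l hl =>
        aux_ne q hq l (Finset.mem_Icc.mp hl).1
    have hu : 1 - (-q) ^ (-((k : ℤ) + 1)) ≠ 0 := by
      have := aux_ne q hq (k + 1) (by omega)
      push_cast at this
      exact this
    rw [← hw]
    set a : ℝ := (-q) ^ (-((k : ℤ) * ((k : ℤ) + 1) / 2)) with ha
    set u : ℝ := (-q) ^ (-((k : ℤ) + 1)) with hudef
    set v : ℝ := (-q) ^ (-((c - (k + 1) : ℕ) : ℤ)) with hvdef
    set P : ℝ := ∏ l ∈ Finset.Icc (c - k) (c - 1), (1 - (-q) ^ (-(l : ℤ))) with hP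
    set Q : ℝ := ∏ l ∈ Finset.Icc 1 k, (1 - (-q) ^ (-(l : ℤ))) with hQdef
    field_simp
    ring
end

section
/- Let q > 1 be a real number, and let t, h, k be integers with 0 ≤ t < h and 0 ≤ k ≤ h - t - 1. Then ∑_{i=t}^{t+k} (-1)^i (-q)^{i/2 - i²/2 + i·t} / [ ∏_{l=1}^{h-i}(1 - (-q)^{-l}) · ∏_{l=1}^{i-t}(1 - (-q)^{-l}) ] = (-1)^{t+k} (-q)^{(t+k+1)(t-k)/2} / [ ∏_{l=1}^{h-t-k-1}(1 - (-q)^{-l}) · ∏_{l=1}^{k}(1 - (-q)^{-l}) · (1 - (-q)^{-(h-t)}) ]. -/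
private lemma fac_ne (q : ℝ) (hq : 1 < q) (m : ℤ) (hm : m < 0) :
    (1 : ℝ) - (-q) ^ m ≠ 0 := by
  have h0 : (0:ℝ) < q := lt_trans one_pos hq
  have key : |(-q) ^ m| = |(-q)| ^ m := map_zpow₀ (absHom : ℝ →*₀ ℝ) (-q) m
  have habs : |(-q) ^ m| < 1 := by
    rw [key, abs_neg, abs_of_pos h0]
    exact zpow_lt_one_of_neg₀ hq hm
  intro hcontra
  have h1 : (-q) ^ m = 1 := by linarith [sub_eq_zero.mp hcontra]
  rw [h1] at habs; simp at habs

private lemma prod_ne (q : ℝ) (hq : 1 < q) (n : ℕ) :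
    (∏ l ∈ Finset.Icc 1 n, (1 - (-q) ^ (-(l : ℤ)))) ≠ 0 := by
  refine Finset.prod_ne_zero_iff.2 fun l hl => fac_ne q hq _ ?_
  have := (Finset.mem_Icc.mp hl).1
  omega

set_option maxHeartbeats 1600000 in
/-- Identity (5.20) of the paper. -/
theorem stmt_3 (q : ℝ) (hq : 1 < q) (t h k : ℕ) (ht : t < h) (hk : k ≤ h - t - 1) :
    ∑ i ∈ Finset.Icc t (t + k),
      (-1 : ℝ) ^ i * (-q) ^ (((i : ℤ) * (1 - (i : ℤ))) / 2 + (i : ℤ) * (t : ℤ)) /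
        ((∏ l ∈ Finset.Icc 1 (h - i), (1 - (-q) ^ (-(l : ℤ)))) *
          (∏ l ∈ Finset.Icc 1 (i - t), (1 - (-q) ^ (-(l : ℤ)))))
    = (-1 : ℝ) ^ (t + k) *
        (-q) ^ ((((t : ℤ) + (k : ℤ) + 1) * ((t : ℤ) - (k : ℤ))) / 2) /
        ((∏ l ∈ Finset.Icc 1 (h - t - k - 1), (1 - (-q) ^ (-(l : ℤ)))) *
          (∏ l ∈ Finset.Icc 1 k, (1 - (-q) ^ (-(l : ℤ)))) *
          (1 - (-q) ^ (-((h : ℤ) - (t : ℤ))))) := by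
  have hx : (-q : ℝ) ≠ 0 := by intro hc; nlinarith
  induction k with
  | zero =>
    simp only [Nat.add_zero, Nat.sub_zero, Finset.Icc_self, Finset.sum_singleton,
      Nat.sub_self, Nat.cast_zero, add_zero, sub_zero]
    rw [show Finset.Icc 1 0 = (∅ : Finset ℕ) by simp, Finset.prod_empty]
    have hexp : ((t : ℤ) * (1 - (t : ℤ))) / 2 + (t : ℤ) * (t : ℤ)
        = (((t : ℤ) + 1) * (t : ℤ)) / 2 := by
      rw [← Int.add_mul_ediv_right _ ((t:ℤ)*(t:ℤ)) (by norm_num : (2:ℤ) ≠ 0)]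
      congr 1; ring
    rw [hexp]
    obtain ⟨n, hn⟩ : ∃ n, h - t - 1 = n := ⟨h - t - 1, rfl⟩
    rw [hn, show h - t = n + 1 by omega,
      Finset.prod_Icc_succ_top (by omega : 1 ≤ n + 1)]
    rw [show -(((n + 1 : ℕ)) : ℤ) = -((h : ℤ) - (t : ℤ)) by omega]
    ring
  | succ k ih =>
    have hk' : k ≤ h - t - 1 := by omega
    have ihv := ih hk'
    rw [show t + (k + 1) = (t + k) + 1 by ring,
      Finset.sum_Icc_succ_top (by omega : t ≤ t + k + 1), ihv]
    set x : ℝ := -q with hxdef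
    rw [show h - (t + k + 1) = h - t - k - 1 by omega,
      show t + k + 1 - t = k + 1 by omega]
    obtain ⟨n, hn⟩ : ∃ n, h - t - (k+1) - 1 = n := ⟨_, rfl⟩
    rw [show h - t - k - 1 = n + 1 by omega, hn,
      Finset.prod_Icc_succ_top (by omega : 1 ≤ n + 1),
      Finset.prod_Icc_succ_top (by omega : 1 ≤ k + 1)]
    set E : ℤ := (((t : ℤ) + ((k+1:ℕ):ℤ) + 1) * ((t : ℤ) - ((k+1:ℕ):ℤ))) / 2 with hEdef
    have hE : (((t : ℤ) + (k : ℤ) + 1) * ((t : ℤ) - (k : ℤ))) / 2 = E + ((k:ℤ)+1) := by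
      rw [hEdef]
      push_cast
      rw [← Int.add_mul_ediv_right _ ((k:ℤ)+1) (by norm_num : (2:ℤ) ≠ 0)]
      congr 1; ring
    have hF : (((t+k+1 : ℕ) : ℤ) * (1 - ((t+k+1 : ℕ) : ℤ))) / 2 + ((t+k+1 : ℕ) : ℤ) * (t : ℤ)
        = E + ((k:ℤ)+1) := by
      rw [hEdef]
      push_cast
      rw [← Int.add_mul_ediv_right _ (((t:ℤ)+(k:ℤ)+1) * (t:ℤ)) (by norm_num : (2:ℤ) ≠ 0),
        ← Int.add_mul_ediv_right _ ((k:ℤ)+1) (by norm_num : (2:ℤ) ≠ 0)]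
      congr 1; ring
    have hxE : x ^ ((((t : ℤ) + (k : ℤ) + 1) * ((t : ℤ) - (k : ℤ))) / 2)
        = x ^ E * x ^ ((k:ℤ)+1) := by rw [hE, zpow_add₀ hx]
    have hxF : x ^ ((((t+k+1 : ℕ) : ℤ) * (1 - ((t+k+1 : ℕ) : ℤ))) / 2 + ((t+k+1 : ℕ) : ℤ) * (t : ℤ))
        = x ^ E * x ^ ((k:ℤ)+1) := by rw [hF, zpow_add₀ hx]
    set u : ℝ := x ^ (-(((k+1:ℕ)) : ℤ)) with hudef
    set v : ℝ := x ^ (-(((n + 1 : ℕ)) : ℤ)) with hvdef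
    have hxk1 : x ^ ((k:ℤ)+1) = u⁻¹ := by
      have hc : ((k:ℤ)+1) = -(-(((k+1:ℕ)) : ℤ)) := by omega
      rw [hc, hudef, zpow_neg]
    have hD : x ^ (-((h : ℤ) - (t : ℤ))) = u * v := by
      rw [hudef, hvdef, ← zpow_add₀ hx]
      congr 1
      omega
    have hu0 : u ≠ 0 := zpow_ne_zero _ hx
    have hu1 : (1:ℝ) - u ≠ 0 := fac_ne q hq _ (by omega)
    have hv1 : (1:ℝ) - v ≠ 0 := fac_ne q hq _ (by omega)
    have huv1 : (1:ℝ) - u * v ≠ 0 := by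
      rw [← hD]; exact fac_ne q hq _ (by omega)
    rw [hxE, hxF, hxk1, hD, pow_succ]
    set P : ℝ := ∏ l ∈ Finset.Icc 1 n, (1 - x ^ (-(l : ℤ))) with hPdef
    set Q : ℝ := ∏ l ∈ Finset.Icc 1 k, (1 - x ^ (-(l : ℤ))) with hQdef
    have hP : P ≠ 0 := hPdef ▸ prod_ne q hq n
    have hQ : Q ≠ 0 := hQdef ▸ prod_ne q hq k
    field_simp
    ring
end

section
/- Let p be an odd prime power and q = p (more generally let q be any odd prime power), and let F_{q²} be the field with q² elements. For every integer n ≥ 1, the number of solutions (x_1, …, x_n) ∈ F_{q²}^n of the equation x_1^{q+1} + x_2^{q+1} + ⋯ + x_n^{q+1} = 0 equals q^{2n-1} + (-q)^n + (-q)^{n-1}. -/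
/-!
Since `Fˣ` is cyclic of order `(q + 1) * (q - 1)`, the norm `x ↦ x ^ (q + 1)` on `Fˣ` has kernel
of order `q + 1` and image the `(q - 1)`-st roots of unity, i.e. `F_qˣ`. A sum of norms is fixed
by `x ↦ x ^ q`, hence lies in `F_q`, and so does its negative because `q` is odd. Splitting off
one coordinate, a point of `F ^ n` extends to a solution in `n + 1` variables in one way if its
partial sum vanishes and in `q + 1` ways otherwise, so the counts satisfy
`c_{n+1} = (q + 1) q^{2n} - q c_n` with `c_0 = 1`, which solves to the closed form.
-/

open Finset

lemma sum_pow_of_card_eq_pow {F ι : Type*} [Field F] [Fintype F] {q k : ℕ} (hq : IsPrimePow q)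
    (hcard : Fintype.card F = q ^ k) (s : Finset ι) (f : ι → F) :
    (∑ i ∈ s, f i) ^ q = ∑ i ∈ s, f i ^ q := by
  obtain ⟨p, e, hp, -, rfl⟩ := hq
  have : Fact p.Prime := ⟨hp.nat_prime⟩
  have : CharP F p := charP_of_card_eq_prime_pow (f := e * k) (by rw [hcard, pow_mul])
  exact sum_pow_char_pow p e s f

section NormMap

variable {F : Type*} [Field F] [Fintype F] {q : ℕ}

lemma pow_succ_pow_eq_self (hcard : Fintype.card F = q ^ 2) (x : F) :
    (x ^ (q + 1)) ^ q = x ^ (q + 1) := by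
  rw [← pow_mul, add_mul, one_mul, ← sq, pow_add, ← hcard, FiniteField.pow_card, pow_succ']

lemma natCard_units_of_card_eq_sq (hcard : Fintype.card F = q ^ 2) :
    Nat.card Fˣ = (q + 1) * (q - 1) := by
  rw [Nat.card_units, Nat.card_eq_fintype_card, hcard, ← Nat.sq_sub_sq, one_pow]

lemma card_ker_powMonoidHom_succ (hcard : Fintype.card F = q ^ 2) :
    Nat.card (powMonoidHom (q + 1) : Fˣ →* Fˣ).ker = q + 1 := by
  rw [IsCyclic.card_powMonoidHom_ker, natCard_units_of_card_eq_sq hcard, Nat.gcd_mul_right_left]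

lemma range_powMonoidHom_succ (hq : 1 < q) (hcard : Fintype.card F = q ^ 2) :
    (powMonoidHom (q + 1) : Fˣ →* Fˣ).range = rootsOfUnity (q - 1) F := by
  apply Subgroup.eq_of_le_of_card_ge
  · rintro _ ⟨v, rfl⟩
    rw [mem_rootsOfUnity, powMonoidHom_apply, ← pow_mul, ← natCard_units_of_card_eq_sq hcard,
      pow_card_eq_one']
  · rw [IsCyclic.card_powMonoidHom_range, natCard_units_of_card_eq_sq hcard,
      Nat.gcd_mul_right_left, Nat.mul_div_cancel_left _ (by omega)]
    have : NeZero (q - 1) := ⟨by omega⟩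
    exact card_rootsOfUnity F (q - 1)

variable [DecidableEq F]

lemma card_filter_pow_eq_units {n : ℕ} (hn : n ≠ 0) (u : Fˣ) :
    #{x : F | x ^ n = u} = #{v : Fˣ | v ^ n = u} := by
  symm
  apply card_bij (fun (v : Fˣ) _ => (v : F))
  · intro v hv
    simp only [mem_filter, mem_univ, true_and] at hv ⊢
    rw [← Units.val_pow_eq_pow_val, hv]
  · intro v _ w _ h
    exact Units.ext h
  · intro x hx
    simp only [mem_filter, mem_univ, true_and] at hx ⊢
    have hx0 : x ≠ 0 := by
      rintro rfl
      exact u.ne_zero (by rw [← hx, zero_pow hn])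
    exact ⟨Units.mk0 x hx0, Units.ext (by simpa using hx), rfl⟩

lemma card_filter_pow_succ_eq (hq : 1 < q) (hcard : Fintype.card F = q ^ 2) {c : F}
    (hc : c ^ q = c) : #{x : F | x ^ (q + 1) = c} = if c = 0 then 1 else q + 1 := by
  split_ifs with hc0
  · subst hc0
    simp only [pow_eq_zero_iff (Nat.succ_ne_zero q), filter_eq', mem_univ, if_true, card_singleton]
  have hc1 : Units.mk0 c hc0 ∈ rootsOfUnity (q - 1) F := by
    rw [mem_rootsOfUnity, Units.ext_iff, Units.val_pow_eq_pow_val, Units.val_mk0, Units.val_one,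
      ← mul_eq_right₀ hc0, pow_sub_one_mul (by omega), hc]
  let φ : Fˣ →* Fˣ := powMonoidHom (q + 1)
  have mem_range : ∀ u ∈ rootsOfUnity (q - 1) F, u ∈ Set.range φ := fun u hu => by
    rwa [← range_powMonoidHom_succ hq hcard] at hu
  calc #{x : F | x ^ (q + 1) = c} = #{v | φ v = Units.mk0 c hc0} :=
        card_filter_pow_eq_units (Nat.succ_ne_zero q) (Units.mk0 c hc0)
    _ = #{v | φ v = 1} :=
        MonoidHom.card_fiber_eq_of_mem_range φ (mem_range _ hc1) (mem_range 1 (one_mem _))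
    _ = Nat.card φ.ker := by
        rw [← Fintype.card_subtype, ← Nat.card_eq_fintype_card]
        rfl
    _ = q + 1 := card_ker_powMonoidHom_succ hcard

end NormMap

lemma card_filter_sum_fin_succ_eq_zero {α R : Type*} [Fintype α] [AddCommGroup R]
    [DecidableEq R] (f : α → R) (m : ℕ) :
    #{x : Fin (m + 1) → α | ∑ i, f (x i) = 0} =
      ∑ x : Fin m → α, #{y | f y = -∑ i, f (x i)} := by
  simp only [card_filter]
  rw [← (Fin.consEquiv fun _ => α).sum_comp, Fintype.sum_prod_type_right]
  simp [Fin.sum_univ_succ, add_eq_zero_iff_eq_neg]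

def hermitianPointCount (F : Type*) [Field F] [Fintype F] [DecidableEq F] (q n : ℕ) : ℕ :=
  #{x : Fin n → F | ∑ i, x i ^ (q + 1) = 0}

section HermitianPointCount

variable {F : Type*} [Field F] [Fintype F] [DecidableEq F] {q : ℕ}

lemma hermitianPointCount_zero : hermitianPointCount F q 0 = 1 := by
  simp [hermitianPointCount]

lemma hermitianPointCount_succ (hq : IsPrimePow q) (hodd : Odd q)
    (hcard : Fintype.card F = q ^ 2) (m : ℕ) :
    (hermitianPointCount F q (m + 1) : ℤ) =
      (q + 1) * q ^ (2 * m) - q * hermitianPointCount F q m := by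
  have fiber (x : Fin m → F) : (#{y : F | y ^ (q + 1) = -∑ i, x i ^ (q + 1)} : ℤ)
      = (q + 1) - q * if ∑ i, x i ^ (q + 1) = 0 then 1 else 0 := by
    have hfix : (-∑ i, x i ^ (q + 1)) ^ q = -∑ i, x i ^ (q + 1) := by
      simp_rw [hodd.neg_pow, sum_pow_of_card_eq_pow hq hcard, pow_succ_pow_eq_self hcard]
    rw [card_filter_pow_succ_eq hq.one_lt hcard hfix]
    simp only [neg_eq_zero]
    split_ifs <;> push_cast <;> ring
  rw [hermitianPointCount, card_filter_sum_fin_succ_eq_zero (fun y : F => y ^ (q + 1)),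
    Nat.cast_sum]
  simp_rw [fiber]
  rw [sum_sub_distrib, ← mul_sum, sum_boole, sum_const, card_univ, Fintype.card_fun, hcard,
    Fintype.card_fin]
  push_cast [hermitianPointCount, pow_mul]
  ring

lemma hermitianPointCount_eq (hq : IsPrimePow q) (hodd : Odd q)
    (hcard : Fintype.card F = q ^ 2) (k : ℕ) :
    (hermitianPointCount F q (k + 1) : ℤ) =
      (q : ℤ) ^ (2 * k + 1) + (-q : ℤ) ^ (k + 1) + (-q : ℤ) ^ k := by
  induction k with
  | zero => rw [hermitianPointCount_succ hq hodd hcard, hermitianPointCount_zero]; ring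
  | succ k ih => rw [hermitianPointCount_succ hq hodd hcard, ih]; ring

end HermitianPointCount

/-- Point count of the Hermitian Fermat hypersurface over `F_q`
(base case of Lemma 5.40). -/
theorem stmt_6 (q : ℕ) (hq : IsPrimePow q) (hodd : Odd q)
    (F : Type) [Field F] [Fintype F] (hcard : Fintype.card F = q ^ 2)
    (n : ℕ) (hn : 1 ≤ n) :
    (Nat.card {x : Fin n → F // ∑ i, x i ^ (q + 1) = 0} : ℤ)
      = (q : ℤ) ^ (2 * n - 1) + (-(q : ℤ)) ^ n + (-(q : ℤ)) ^ (n - 1) := by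
  classical
  obtain ⟨k, rfl⟩ := Nat.exists_eq_add_of_le' hn
  rw [Nat.card_eq_fintype_card, Fintype.card_subtype, show 2 * (k + 1) - 1 = 2 * k + 1 by omega,
    Nat.add_sub_cancel]
  exact hermitianPointCount_eq hq hodd hcard k
end

section
/- Let q > 1 be a real number and let n, h, c, s be integers with 0 ≤ s ≤ h ≤ n, c ≥ 0, and s + c ≤ n. For s ≤ i ≤ min(s+c, h) define X_{n,h}(c,i,s) = (-1)^i (-q)^{i/2 - i²/2 + is} · ∏_{l=1}^{n-i}(1 - (-q)^{-l}) / [ ∏_{l=1}^{h-i}(1 - (-q)^{-l}) · ∏_{l=1}^{i-s}(1 - (-q)^{-l}) · ∏_{l=1}^{c-i+s}(1 - (-q)^{-l}) ]. Then: (a) if c ≤ n - h, ∑_{i=s}^{min(s+c,h)} X_{n,h}(c,i,s) = (-1)^s (-q)^{-ch + cs + s/2 + s²/2} · ∏_{l=1}^{n-h}(1 - (-q)^{-l}) · ∏_{l=1}^{n-s-c}(1 - (-q)^{-l}) / [ ∏_{l=1}^{h-s}(1 - (-q)^{-l}) · ∏_{l=1}^{c}(1 - (-q)^{-l}) · ∏_{l=1}^{n-h-c}(1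 - (-q)^{-l}) ]; and (b) if c > n - h, then ∑_{i=s}^{min(s+c,h)} X_{n,h}(c,i,s) = 0. -/
open Finset

/-- The quantity `X_{n,h}(c,i,s)` from Lemma 5.21 of the paper. -/
noncomputable def Xnh (q : ℝ) (n h c s i : ℕ) : ℝ :=
  (-1 : ℝ) ^ i * (-q) ^ (((i : ℤ) * (1 - (i : ℤ))) / 2 + (i : ℤ) * (s : ℤ)) *
      (∏ l ∈ Finset.Icc 1 (n - i), (1 - (-q) ^ (-(l : ℤ)))) /
    ((∏ l ∈ Finset.Icc 1 (h - i), (1 - (-q) ^ (-(l : ℤ)))) *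
      (∏ l ∈ Finset.Icc 1 (i - s), (1 - (-q) ^ (-(l : ℤ)))) *
      (∏ l ∈ Finset.Icc 1 (c + s - i), (1 - (-q) ^ (-(l : ℤ)))))

noncomputable def Pp (x : ℝ) (m : ℕ) : ℝ := ∏ l ∈ Finset.Icc 1 m, (1 - x ^ l)

lemma Pp_zero (x : ℝ) : Pp x 0 = 1 := by simp [Pp]

lemma Pp_succ (x : ℝ) (m : ℕ) : Pp x (m+1) = Pp x m * (1 - x ^ (m+1)) := by
  rw [Pp, Pp, Finset.prod_Icc_succ_top (by omega)]

lemma one_sub_pow_pos {x : ℝ} (hx : |x| < 1) {l : ℕ} (hl : 1 ≤ l) : 0 < 1 - x ^ l := by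
  have h : |x ^ l| < 1 := by
    rw [abs_pow]; exact pow_lt_one₀ (abs_nonneg x) hx (by omega)
  linarith [(abs_lt.mp h).2]

lemma Pp_pos {x : ℝ} (hx : |x| < 1) (m : ℕ) : 0 < Pp x m :=
  Finset.prod_pos fun _ hl => one_sub_pow_pos hx (Finset.mem_Icc.mp hl).1

lemma Pp_ne {x : ℝ} (hx : |x| < 1) (m : ℕ) : Pp x m ≠ 0 := (Pp_pos hx m).ne'

lemma one_sub_pow_ne {x : ℝ} (hx : |x| < 1) {l : ℕ} (hl : 1 ≤ l) : (1 : ℝ) - x ^ l ≠ 0 :=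
  (one_sub_pow_pos hx hl).ne'

noncomputable def gterm (x : ℝ) (c N H j : ℕ) : ℝ :=
  (-1:ℝ)^j * x^(j*(j-1)/2) * Pp x (N-j) / (Pp x (H-j) * Pp x j * Pp x (c-j))

lemma tri_succ (k : ℕ) : (k+1)*k/2 = k*(k-1)/2 + k := by
  cases k with
  | zero => rfl
  | succ m =>
    simp only [Nat.add_sub_cancel]
    rw [show (m+1+1)*(m+1) = (m+1)*m + 2*(m+1) by ring,
      Nat.add_mul_div_left _ _ (by norm_num : (0:ℕ) < 2)]

set_option maxHeartbeats 1600000 in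
lemma core (x : ℝ) (hx : |x| < 1) (c : ℕ) : ∀ N H : ℕ, c ≤ H → H ≤ N →
    ∑ j ∈ Finset.range (c+1), gterm x c N H j =
      if c + H ≤ N then
        x^(c*H) * Pp x (N-H) * Pp x (N-c) / (Pp x H * Pp x c * Pp x (N-H-c))
      else 0 := by
  induction c with
  | zero =>
    intro N H _ hHN
    rw [Finset.sum_range_one, if_pos (by omega)]
    simp only [gterm, Pp_zero, Nat.sub_zero, Nat.zero_mul, Nat.zero_div, pow_zero]
    have hP := Pp_ne hx
    field_simp [hP H, hP (N-H)]
  | succ c ih =>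
    intro N H h1 h2
    have hH1 : 1 ≤ H := by omega
    have hN1 : 1 ≤ N := by omega
    have hne : (1:ℝ) - x^(c+1) ≠ 0 := one_sub_pow_ne hx (by omega)
    have hP := Pp_ne hx
    -- pointwise splitting
    have key : ∀ j ∈ Finset.range (c+2),
        (1 - x^(c+1)) * gterm x (c+1) N H j =
          (if j ≤ c then gterm x c N H j else 0) +
          (if 1 ≤ j then -(x^c) * gterm x c (N-1) (H-1) (j-1) else 0) := by
      intro j hj
      rw [Finset.mem_range] at hj
      rcases Nat.eq_zero_or_pos j with rfl | hj1
      · -- j = 0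
        rw [if_pos (by omega), if_neg (by omega), add_zero]
        simp only [gterm, Nat.sub_zero, pow_zero, Nat.zero_mul, Nat.zero_div, Pp_zero]
        rw [Pp_succ x c]
        have hD1 : Pp x H * 1 * (Pp x c * (1 - x^(c+1))) ≠ 0 :=
          mul_ne_zero (mul_ne_zero (hP H) one_ne_zero) (mul_ne_zero (hP c) hne)
        have hD2 : Pp x H * 1 * Pp x c ≠ 0 :=
          mul_ne_zero (mul_ne_zero (hP H) one_ne_zero) (hP c)
        simp only [← mul_div_assoc]
        rw [div_eq_div_iff hD1 hD2]
        ring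
      · rcases Nat.lt_or_ge j (c+1) with hjc | hjc
        · -- 1 ≤ j ≤ c
          have hjc' : j ≤ c := by omega
          rw [if_pos hjc', if_pos (show 1 ≤ j by omega)]
          obtain ⟨k, rfl⟩ : ∃ k, j = k + 1 := ⟨j - 1, by omega⟩
          simp only [gterm, Nat.add_sub_cancel]
          rw [show c + 1 - (k+1) = (c - (k+1)) + 1 by omega,
            show N - 1 - k = N - (k+1) by omega,
            show H - 1 - k = H - (k+1) by omega,
            show c - k = (c - (k+1)) + 1 by omega,
            tri_succ]
          simp only [Pp_succ]
          have e1 : x ^ (k*(k-1)/2 + k) = x ^ (k*(k-1)/2) * x ^ k := pow_add x _ _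
          have e2 : x ^ (c+1) = x ^ (c - (k+1) + 1) * (x ^ k * x) := by
            rw [← pow_succ, ← pow_add]; congr 1; omega
          have e3 : x ^ c = x ^ (c - (k+1) + 1) * x ^ k := by
            rw [← pow_add]; congr 1; omega
          have e4 : x ^ (k+1) = x ^ k * x := pow_succ x k
          rw [e1, e2, e3, e4]
          have h5 : (1:ℝ) - x ^ (c - (k+1) + 1) ≠ 0 := one_sub_pow_ne hx (by omega)
          have h6 : (1:ℝ) - x ^ k * x ≠ 0 := by
            rw [← pow_succ]; exact one_sub_pow_ne hx (by omega)
          have hD1 : Pp x (H-(k+1)) * (Pp x k * (1 - x^k*x))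
              * (Pp x (c-(k+1)) * (1 - x^(c-(k+1)+1))) ≠ 0 :=
            mul_ne_zero (mul_ne_zero (hP _) (mul_ne_zero (hP k) h6))
              (mul_ne_zero (hP _) h5)
          have hD2 : Pp x (H-(k+1)) * (Pp x k * (1 - x^k*x)) * Pp x (c-(k+1)) ≠ 0 :=
            mul_ne_zero (mul_ne_zero (hP _) (mul_ne_zero (hP k) h6)) (hP _)
          have hD3 : Pp x (H-(k+1)) * Pp x k * (Pp x (c-(k+1)) * (1 - x^(c-(k+1)+1))) ≠ 0 :=
            mul_ne_zero (mul_ne_zero (hP _) (hP k)) (mul_ne_zero (hP _) h5)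
          simp only [← mul_div_assoc]
          rw [div_add_div _ _ hD2 hD3, div_eq_div_iff hD1 (mul_ne_zero hD2 hD3)]
          ring
        · -- j = c + 1
          have hj' : j = c + 1 := by omega
          subst hj'
          rw [if_neg (by omega), if_pos (by omega), zero_add]
          simp only [gterm, Nat.sub_self, Pp_zero, Nat.add_sub_cancel]
          rw [show N - (c+1) = N - 1 - c by omega, show H - (c+1) = H - 1 - c by omega,
            tri_succ, Pp_succ x c, show x ^ (c*(c-1)/2 + c) = x ^ (c*(c-1)/2) * x ^ c from pow_add x _ _]
          have hD1 : Pp x (H-1-c) * (Pp x c * (1 - x^(c+1))) * 1 ≠ 0 :=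
            mul_ne_zero (mul_ne_zero (hP _) (mul_ne_zero (hP c) hne)) one_ne_zero
          have hD2 : Pp x (H-1-c) * Pp x c * 1 ≠ 0 :=
            mul_ne_zero (mul_ne_zero (hP _) (hP c)) one_ne_zero
          simp only [← mul_div_assoc]
          rw [div_eq_div_iff hD1 hD2]
          ring
    have hB : ∑ j ∈ Finset.range (c+2), (if j ≤ c then gterm x c N H j else 0)
        = ∑ j ∈ Finset.range (c+1), gterm x c N H j := by
      rw [Finset.sum_range_succ, if_neg (by omega), add_zero]
      exact Finset.sum_congr rfl fun j hj =>
        if_pos (by rw [Finset.mem_range] at hj; omega)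
    have hC : ∑ j ∈ Finset.range (c+2),
          (if 1 ≤ j then -(x^c) * gterm x c (N-1) (H-1) (j-1) else 0)
        = -(x^c * ∑ j ∈ Finset.range (c+1), gterm x c (N-1) (H-1) j) := by
      rw [Finset.sum_range_succ', if_neg (by omega), add_zero]
      have h' : ∀ k ∈ Finset.range (c+1),
          (if 1 ≤ k+1 then -(x^c) * gterm x c (N-1) (H-1) (k+1-1) else 0)
            = -(x^c * gterm x c (N-1) (H-1) k) := fun k _ => by
        rw [if_pos (by omega), Nat.add_sub_cancel]; ring
      rw [Finset.sum_congr rfl h', Finset.sum_neg_distrib, Finset.mul_sum]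
    have hsplit : (1 - x^(c+1)) * ∑ j ∈ Finset.range (c+2), gterm x (c+1) N H j
        = (∑ j ∈ Finset.range (c+1), gterm x c N H j)
          - x^c * ∑ j ∈ Finset.range (c+1), gterm x c (N-1) (H-1) j := by
      rw [Finset.mul_sum, Finset.sum_congr rfl key, Finset.sum_add_distrib, hB, hC]
      ring
    rw [ih N H (by omega) h2, ih (N-1) (H-1) (by omega) (by omega)] at hsplit
    have hS : ∑ j ∈ Finset.range (c+1+1), gterm x (c+1) N H j
        = ((if c + H ≤ N then
              x^(c*H) * Pp x (N-H) * Pp x (N-c) / (Pp x H * Pp x c * Pp x (N-H-c))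
            else 0)
          - x^c * (if c + (H-1) ≤ N-1 then
              x^(c*(H-1)) * Pp x (N-1-(H-1)) * Pp x (N-1-c)
                / (Pp x (H-1) * Pp x c * Pp x (N-1-(H-1)-c))
            else 0)) / (1 - x^(c+1)) := by
      rw [eq_div_iff hne]
      linear_combination hsplit
    rw [hS]
    clear hS hsplit hB hC key ih
    by_cases hcon : c + 1 + H ≤ N
    · rw [if_pos (by omega), if_pos (by omega), if_pos hcon]
      obtain ⟨H₁, rfl⟩ : ∃ H₁, H = H₁ + 1 := ⟨H - 1, by omega⟩
      obtain ⟨D, rfl⟩ : ∃ D, N = H₁ + 1 + c + 1 + D := ⟨N - H₁ - c - 2, by omega⟩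
      simp only [Nat.add_sub_cancel,
        show H₁+1+c+1+D - (H₁+1) = c+1+D by omega,
        show H₁+1+c+1+D - c = H₁+1+D+1 by omega,
        show c+1+D - c = D+1 by omega,
        show H₁+1+c+1+D - 1 - H₁ = c+1+D by omega,
        show H₁+1+c+1+D - 1 - c = H₁+1+D by omega,
        show H₁+1+c+1+D - (c+1) = H₁+1+D by omega,
        show c+1+D - (c+1) = D by omega]
      simp only [Pp_succ]
      rw [show x^((c+1)*(H₁+1)) = x^(c*H₁) * x^c * x^H₁ * x by
            rw [show (c+1)*(H₁+1) = c*H₁ + c + H₁ + 1 by ring, pow_add, pow_add, pow_add,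
              pow_one],
        show x^(c*(H₁+1)) = x^(c*H₁) * x^c by
            rw [show c*(H₁+1) = c*H₁ + c by ring, pow_add],
        show x^(H₁+1+D+1) = x^H₁ * x * x^(D+1) by
            rw [show H₁+1+D+1 = H₁ + 1 + (D+1) by ring, pow_add, pow_add, pow_one],
        pow_succ x H₁, pow_succ x c]
      have hne4 : (1:ℝ) - x^c * x ≠ 0 := by rw [← pow_succ]; exact hne
      have hne5 : (1:ℝ) - x^H₁ * x ≠ 0 := by
        rw [← pow_succ]; exact one_sub_pow_ne hx (by omega)
      have hneD : (1:ℝ) - x^(D+1) ≠ 0 := one_sub_pow_ne hx (by omega)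
      have hD1 : Pp x H₁ * (1 - x ^ H₁ * x) * Pp x c * (Pp x D * (1 - x ^ (D + 1))) ≠ 0 :=
        mul_ne_zero (mul_ne_zero (mul_ne_zero (hP H₁) hne5) (hP c))
          (mul_ne_zero (hP D) hneD)
      have hD2 : Pp x H₁ * Pp x c * (Pp x D * (1 - x ^ (D + 1))) ≠ 0 :=
        mul_ne_zero (mul_ne_zero (hP H₁) (hP c)) (mul_ne_zero (hP D) hneD)
      have hDR : Pp x H₁ * (1 - x ^ H₁ * x) * (Pp x c * (1 - x ^ c * x)) * Pp x D ≠ 0 :=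
        mul_ne_zero (mul_ne_zero (mul_ne_zero (hP H₁) hne5) (mul_ne_zero (hP c) hne4))
          (hP D)
      simp only [mul_div_assoc']
      rw [div_sub_div _ _ hD1 hD2, div_div,
        div_eq_div_iff (mul_ne_zero (mul_ne_zero hD1 hD2) hne4) hDR]
      ring
    · by_cases hcon2 : c + H ≤ N
      · -- N = c + H
        rw [if_pos hcon2, if_pos (by omega), if_neg hcon]
        have hN : N = c + H := by omega
        subst hN
        obtain ⟨H₁, rfl⟩ : ∃ H₁, H = H₁ + 1 := ⟨H - 1, by omega⟩
        simp only [Nat.add_sub_cancel,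
          show c + (H₁+1) - (H₁+1) = c by omega,
          show c + (H₁+1) - c = H₁+1 by omega,
          show c - c = 0 by omega,
          show c + (H₁+1) - 1 - H₁ = c by omega,
          show c + (H₁+1) - 1 - c = H₁ by omega, Pp_zero]
        rw [show c*(H₁+1) = c*H₁ + c by ring, pow_add, div_eq_zero_iff]
        left
        rw [sub_eq_zero]
        have hD1 : Pp x (H₁+1) * Pp x c * 1 ≠ 0 :=
          mul_ne_zero (mul_ne_zero (hP _) (hP c)) one_ne_zero
        have hD2 : Pp x H₁ * Pp x c * 1 ≠ 0 :=
          mul_ne_zero (mul_ne_zero (hP _) (hP c)) one_ne_zero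
        simp only [← mul_div_assoc]
        rw [div_eq_div_iff hD1 hD2]
        ring
      · rw [if_neg hcon2, if_neg (by omega), if_neg hcon]
        simp

lemma core' (x : ℝ) (hx : |x| < 1) (c N H : ℕ) (hH : H ≤ N) (hc : c ≤ N) :
    ∑ j ∈ Finset.range (min c H + 1), gterm x c N H j =
      if c + H ≤ N then
        x^(c*H) * Pp x (N-H) * Pp x (N-c) / (Pp x H * Pp x c * Pp x (N-H-c))
      else 0 := by
  rcases le_total c H with hch | hch
  · rw [min_eq_left hch]
    exact core x hx c N H hch hH
  · rw [min_eq_right hch]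
    have hsym : ∀ j, gterm x c N H j = gterm x H N c j := fun j => by
      simp only [gterm]; ring
    rw [Finset.sum_congr rfl (fun j _ => hsym j), core x hx H N c hch hc]
    by_cases hcond : c + H ≤ N
    · rw [if_pos (by omega), if_pos hcond, show N-c-H = N-H-c by omega,
        show H*c = c*H by ring]
      ring
    · rw [if_neg (by omega), if_neg hcond]

lemma exp_shift (s j : ℕ) : (((s+j : ℕ) : ℤ) * (1 - ((s+j : ℕ) : ℤ))) / 2
      + ((s+j : ℕ) : ℤ) * (s : ℤ)
    = ((s : ℤ) * ((s : ℤ) + 1)) / 2 - ((j*(j-1)/2 : ℕ) : ℤ) := by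
  obtain ⟨a, ha⟩ := Nat.even_mul_succ_self s
  have ha2 : s*(s+1)/2 = a := by omega
  zify at ha
  obtain ⟨b, hb⟩ : Even (j*(j-1)) := by
    rcases Nat.even_or_odd j with he | ho
    · exact he.mul_right _
    · exact (Nat.Odd.sub_odd ho odd_one).mul_left _
  have hb2 : j*(j-1)/2 = b := by omega
  have hbz : (j:ℤ)*((j:ℤ)-1) = (b:ℤ)+(b:ℤ) := by
    cases j with
    | zero => simp at hb ⊢; omega
    | succ m =>
      simp only [Nat.add_sub_cancel] at hb
      zify at hb
      push_cast
      linear_combination hb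
  rw [hb2]
  push_cast
  have hkey : ((s:ℤ)+(j:ℤ))*(1-((s:ℤ)+(j:ℤ))) + 2*(((s:ℤ)+(j:ℤ))*(s:ℤ))
      = ((a:ℤ)+(a:ℤ)) - ((b:ℤ)+(b:ℤ)) := by linear_combination ha - hbz
  rw [ha]
  generalize h1 : ((s:ℤ)+(j:ℤ))*(1-((s:ℤ)+(j:ℤ))) = u at hkey ⊢
  generalize h2 : ((s:ℤ)+(j:ℤ))*(s:ℤ) = v at hkey ⊢
  omega

section main
variable (q : ℝ)

lemma hpowq (hq : 1 < q) : ∀ l : ℕ, ((-q):ℝ)^(-(l:ℤ)) = ((-q)⁻¹)^l := fun l => by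
  rw [zpow_neg, zpow_natCast, inv_pow]

lemma hprodq (hq : 1 < q) (m : ℕ) :
    (∏ l ∈ Finset.Icc 1 m, (1 - (-q:ℝ)^(-(l:ℤ)))) = Pp ((-q)⁻¹) m :=
  Finset.prod_congr rfl fun l _ => by rw [hpowq q hq l]

lemma hXpoint (hq : 1 < q) (n h c s : ℕ) (j : ℕ) :
    Xnh q n h c s (s+j) = (-1:ℝ)^s * (-q)^(((s:ℤ)*((s:ℤ)+1))/2)
      * gterm ((-q)⁻¹) c (n-s) (h-s) j := by
  have hq0 : (-q : ℝ) ≠ 0 := by intro h'; nlinarith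
  unfold Xnh gterm
  rw [show n - (s+j) = n - s - j from (Nat.sub_sub n s j).symm,
    show h - (s+j) = h - s - j from (Nat.sub_sub h s j).symm,
    Nat.add_sub_cancel_left,
    show c + s - (s+j) = c - j by omega,
    hprodq q hq (n-s-j), hprodq q hq (h-s-j), hprodq q hq j, hprodq q hq (c-j),
    pow_add, exp_shift s j, sub_eq_add_neg,
    zpow_add₀ hq0, zpow_neg, zpow_natCast, ← inv_pow]
  ring

end main


set_option maxHeartbeats 800000 in
/-- The closed-form evaluation (5.22) inside Lemma 5.21 of the paper. -/
theorem stmt_9 (q : ℝ) (hq : 1 < q) (n h c s : ℕ)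
    (hs : s ≤ h) (hh : h ≤ n) (hsc : s + c ≤ n) :
    (c ≤ n - h →
      ∑ i ∈ Finset.Icc s (min (s + c) h), Xnh q n h c s i
        = (-1 : ℝ) ^ s *
            (-q) ^ (-((c : ℤ) * (h : ℤ)) + (c : ℤ) * (s : ℤ) + ((s : ℤ) * ((s : ℤ) + 1)) / 2) *
            (∏ l ∈ Finset.Icc 1 (n - h), (1 - (-q) ^ (-(l : ℤ)))) *
            (∏ l ∈ Finset.Icc 1 (n - s - c), (1 - (-q) ^ (-(l : ℤ)))) /
          ((∏ l ∈ Finset.Icc 1 (h - s), (1 - (-q) ^ (-(l : ℤ)))) *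
            (∏ l ∈ Finset.Icc 1 c, (1 - (-q) ^ (-(l : ℤ)))) *
            (∏ l ∈ Finset.Icc 1 (n - h - c), (1 - (-q) ^ (-(l : ℤ)))))) ∧
    (n - h < c → ∑ i ∈ Finset.Icc s (min (s + c) h), Xnh q n h c s i = 0) := by
  have hq0 : (-q : ℝ) ≠ 0 := by intro h'; nlinarith
  have hx : |(-q)⁻¹| < 1 := by
    rw [abs_inv, abs_neg, abs_of_pos (by linarith : (0:ℝ) < q)]
    rw [inv_lt_one_iff₀]
    right; exact hq
  have hsum : ∑ i ∈ Finset.Icc s (min (s + c) h), Xnh q n h c s i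
      = (-1:ℝ)^s * (-q)^(((s:ℤ)*((s:ℤ)+1))/2)
        * ∑ j ∈ Finset.range (min c (h-s) + 1), gterm ((-q)⁻¹) c (n-s) (h-s) j := by
    rw [← Finset.Ico_add_one_right_eq_Icc, Finset.sum_Ico_eq_sum_range,
      show min (s+c) h + 1 - s = min c (h-s) + 1 by omega,
      Finset.sum_congr rfl (fun j _ => hXpoint q hq n h c s j), ← Finset.mul_sum]
  rw [hsum, core' ((-q)⁻¹) hx c (n-s) (h-s) (by omega) (by omega)]
  constructor
  · intro hc
    rw [if_pos (by omega),
      show n-s-(h-s) = n-h by omega,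
      hprodq q hq (n-h), hprodq q hq (n-s-c), hprodq q hq (h-s), hprodq q hq c,
      hprodq q hq (n-h-c)]
    have hsc2 : ((-q:ℝ))^(((s:ℤ)*((s:ℤ)+1))/2) * ((-q)⁻¹)^(c*(h-s))
        = (-q)^(-((c:ℤ)*(h:ℤ)) + (c:ℤ)*(s:ℤ) + ((s:ℤ)*((s:ℤ)+1))/2) := by
      rw [inv_pow, ← zpow_natCast (-q) (c*(h-s)), ← zpow_neg, ← zpow_add₀ hq0]
      congr 1
      have hcast : ((c*(h-s):ℕ):ℤ) = (c:ℤ)*(h:ℤ) - (c:ℤ)*(s:ℤ) := by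
        rw [Nat.cast_mul, Nat.cast_sub hs]; ring
      rw [hcast]; ring
    rw [← hsc2]
    ring
  · intro hc
    rw [if_neg (by omega)]
    simp
end

section
/- Let q > 1 be a real number, and let n, h, c, s be integers with 0 ≤ s < h ≤ n, 1 ≤ c, and s + c ≤ n. With X_{n,h}(c,i,s) = (-1)^i (-q)^{i/2 - i²/2 + is} · ∏_{l=1}^{n-i}(1 - (-q)^{-l}) / [ ∏_{l=1}^{h-i}(1 - (-q)^{-l}) · ∏_{l=1}^{i-s}(1 - (-q)^{-l}) · ∏_{l=1}^{c-i+s}(1 - (-q)^{-l}) ], one has ∑_{i=s}^{min(s+c,h)} X_{n,h}(c,i,s)/X_{n,h}(c,s,s) = [ (-q)^{-(h-s)} (1 - (-q)^{-(n-h)}) / (1 - (-q)^{-(n-s)}) ] · ∑_{i=s}^{min(s+c-1,h)} X_{n-1,h}(c-1,i,s)/X_{n-1,h}(c-1,s,s). -/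
/-!
Put x = (-q)⁻¹, N = n - s, H = h - s. The ratio X_{n,h}(c,s+t,s) / X_{n,h}(c,s,s) is the term
a_t = `qTerm x N H c t` of a terminating q-hypergeometric series: consecutive terms differ by the
factor -x^t (1 - x^(c-t)) (1 - x^(H-t)) / ((1 - x^(t+1)) (1 - x^(N-t))). The terms b_t of the
right-hand sum (N and c lowered by one) are a_t times an explicit rational factor, and with it
a_t - F b_t = g_t - g_(t+1) for g_t = (1 - x^t) / (1 - x^c) · a_t, so the difference of the two
sums telescopes to g_0 - g_(c+1) = 0.
-/

open Finset

lemma one_sub_pow_ne_zero {K : Type*} [Field K] {x : K} (hx : ¬IsOfFinOrder x) {k : ℕ}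
    (hk : k ≠ 0) : 1 - x ^ k ≠ 0 :=
  sub_ne_zero.2 fun h ↦ hx <| isOfFinOrder_iff_pow_eq_one.2 ⟨k, k.pos_of_ne_zero hk, h.symm⟩

section qTerm

variable {K : Type*} [Field K] {x : K}

/-- Truncated subtraction makes the factor `l = min c H` vanish, so the series terminates there. -/
def qTerm (x : K) (N H c t : ℕ) : K :=
  (-1) ^ t * x ^ t.choose 2 *
    ∏ l ∈ range t, (1 - x ^ (c - l)) * (1 - x ^ (H - l)) / (1 - x ^ (l + 1)) / (1 - x ^ (N - l))

variable (x) (N H c : ℕ)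

@[simp] lemma qTerm_zero : qTerm x N H c 0 = 1 := by simp [qTerm]

lemma qTerm_succ (t : ℕ) :
    qTerm x N H c (t + 1) = -x ^ t * (1 - x ^ (c - t)) * (1 - x ^ (H - t)) /
      (1 - x ^ (t + 1)) / (1 - x ^ (N - t)) * qTerm x N H c t := by
  simp only [qTerm, prod_range_succ, Nat.choose_succ_succ', Nat.choose_one_right, pow_succ,
    pow_add]
  ring

lemma qTerm_eq_zero {t : ℕ} (ht : min c H < t) : qTerm x N H c t = 0 := by
  refine mul_eq_zero_of_right _ (prod_eq_zero (mem_range.2 ht) ?_)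
  rcases min_choice c H with h | h <;> simp [h]

lemma sum_range_qTerm {m : ℕ} (hm : min c H < m) :
    ∑ t ∈ range m, qTerm x N H c t = ∑ t ∈ range (min c H + 1), qTerm x N H c t :=
  (sum_subset (range_subset_range.2 hm) fun _ _ ht ↦
    qTerm_eq_zero x N H c (by rw [mem_range] at ht; omega)).symm

variable {x}

lemma qTerm_eq_mul_qTerm_succ (hx : ¬IsOfFinOrder x) (t : ℕ) :
    qTerm x N H c t = (1 - x ^ (c + 1 - t)) * (1 - x ^ (N + 1)) /
      (1 - x ^ (c + 1)) / (1 - x ^ (N + 1 - t)) * qTerm x (N + 1) H (c + 1) t := by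
  induction t with
  | zero =>
    have hc := one_sub_pow_ne_zero hx c.succ_ne_zero
    have hN := one_sub_pow_ne_zero hx N.succ_ne_zero
    simp [hc, hN]
  | succ t ih =>
    rw [qTerm_succ, ih, qTerm_succ, Nat.add_sub_add_right, Nat.add_sub_add_right]
    ring

lemma qTerm_telescope (hx : ¬IsOfFinOrder x) (hH : H ≤ N + 1) (hc : c ≤ N) {t : ℕ}
    (ht : t ≤ c + 1) :
    qTerm x (N + 1) H (c + 1) t
        - x ^ H * (1 - x ^ (N + 1 - H)) / (1 - x ^ (N + 1)) * qTerm x N H c t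
      = (1 - x ^ t) / (1 - x ^ (c + 1)) * qTerm x (N + 1) H (c + 1) t
        - (1 - x ^ (t + 1)) / (1 - x ^ (c + 1)) * qTerm x (N + 1) H (c + 1) (t + 1) := by
  have hc₁ : 1 - x ^ (c + 1) ≠ 0 := one_sub_pow_ne_zero hx (by omega)
  rcases lt_or_ge H t with hHt | htH
  · rw [qTerm_eq_zero x N H c (by omega), qTerm_eq_zero x (N + 1) H (c + 1) (by omega),
      qTerm_eq_zero x (N + 1) H (c + 1) (by omega)]
    simp
  rcases ht.lt_or_eq with htc | rfl
  · rw [qTerm_eq_mul_qTerm_succ N H c hx t, qTerm_succ x (N + 1) H (c + 1) t]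
    have e₁ : x ^ (c + 1) = x ^ t * x ^ (c + 1 - t) := by rw [← pow_add]; congr 1; omega
    have e₂ : x ^ (N + 1 - t) = x ^ (H - t) * x ^ (N + 1 - H) := by rw [← pow_add]; congr 1; omega
    have e₃ : x ^ (N + 1) = x ^ t * x ^ (H - t) * x ^ (N + 1 - H) := by
      rw [← pow_add, ← pow_add]; congr 1; omega
    have e₄ : x ^ H = x ^ t * x ^ (H - t) := by rw [← pow_add]; congr 1; omega
    have h₁ : 1 - x ^ t * x ^ (c + 1 - t) ≠ 0 := e₁ ▸ hc₁
    have h₂ : 1 - x ^ (H - t) * x ^ (N + 1 - H) ≠ 0 := e₂ ▸ one_sub_pow_ne_zero hx (by omega)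
    have h₃ : 1 - x ^ t * x ^ (H - t) * x ^ (N + 1 - H) ≠ 0 :=
      e₃ ▸ one_sub_pow_ne_zero hx (by omega)
    have h₄ : 1 - x ^ (t + 1) ≠ 0 := one_sub_pow_ne_zero hx (by omega)
    rw [e₁, e₂, e₃, e₄]
    field_simp
    ring
  · rw [qTerm_eq_zero x N H c (by omega),
      qTerm_eq_zero x (N + 1) H (c + 1) (t := c + 1 + 1) (by omega), div_self hc₁]
    ring

theorem sum_qTerm_succ (hx : ¬IsOfFinOrder x) (hH : H ≤ N + 1) (hc : c ≤ N) :
    ∑ t ∈ range (min (c + 1) H + 1), qTerm x (N + 1) H (c + 1) t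
      = x ^ H * (1 - x ^ (N + 1 - H)) / (1 - x ^ (N + 1)) *
        ∑ t ∈ range (min c H + 1), qTerm x N H c t := by
  rw [← sum_range_qTerm x (N + 1) H (c + 1) (m := c + 2) (by omega),
    ← sum_range_qTerm x N H c (m := c + 2) (by omega), mul_sum, ← sub_eq_zero,
    ← sum_sub_distrib,
    sum_congr rfl fun t ht ↦ qTerm_telescope N H c hx hH hc (by rw [mem_range] at ht; omega),
    sum_range_sub', qTerm_eq_zero x (N + 1) H (c + 1) (t := c + 2) (by omega)]
  simp

end qTerm

lemma not_isOfFinOrder_inv_neg {q : ℝ} (hq : |q| ≠ 1) : ¬IsOfFinOrder (-q)⁻¹ := fun h ↦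
  hq <| by simpa using h.norm_eq_one

section Xnh

variable {q : ℝ}

lemma prod_Icc_one_sub_ne_zero (hq : |q| ≠ 1) (m : ℕ) : ∏ l ∈ Icc 1 m, (1 - (-q)⁻¹ ^ l) ≠ 0 :=
  prod_ne_zero_iff.2 fun l hl ↦
    one_sub_pow_ne_zero (not_isOfFinOrder_inv_neg hq) (by rw [mem_Icc] at hl; omega)

lemma Xnh_eq_inv_pow (n h c s i : ℕ) :
    Xnh q n h c s i = (-1) ^ i * (-q) ^ ((i : ℤ) * (1 - i) / 2 + i * s) *
      (∏ l ∈ Icc 1 (n - i), (1 - (-q)⁻¹ ^ l)) /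
        ((∏ l ∈ Icc 1 (h - i), (1 - (-q)⁻¹ ^ l)) * (∏ l ∈ Icc 1 (i - s), (1 - (-q)⁻¹ ^ l)) *
          ∏ l ∈ Icc 1 (c + s - i), (1 - (-q)⁻¹ ^ l)) := by
  simp only [Xnh, zpow_neg, zpow_natCast, inv_pow]

lemma Xnh_ne_zero (hq₀ : q ≠ 0) (hq : |q| ≠ 1) (n h c s i : ℕ) : Xnh q n h c s i ≠ 0 := by
  have hP := prod_Icc_one_sub_ne_zero hq
  rw [Xnh_eq_inv_pow]
  exact div_ne_zero (mul_ne_zero (mul_ne_zero (pow_ne_zero _ (by norm_num))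
    (zpow_ne_zero _ (neg_ne_zero.2 hq₀))) (hP _)) (mul_ne_zero (mul_ne_zero (hP _) (hP _)) (hP _))

lemma Xnh_add_succ (hq₀ : q ≠ 0) (hq : |q| ≠ 1) {n h c s t : ℕ} (htc : t < c) (hth : s + t < h)
    (htn : s + t < n) :
    Xnh q n h c s (s + t + 1) = -(-q)⁻¹ ^ t * (1 - (-q)⁻¹ ^ (c - t)) * (1 - (-q)⁻¹ ^ (h - s - t)) /
      (1 - (-q)⁻¹ ^ (t + 1)) / (1 - (-q)⁻¹ ^ (n - s - t)) * Xnh q n h c s (s + t) := by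
  have hx := not_isOfFinOrder_inv_neg hq
  have hP := prod_Icc_one_sub_ne_zero hq
  have he : ((s + t + 1 : ℕ) : ℤ) * (1 - (s + t + 1 : ℕ)) / 2 + (s + t + 1 : ℕ) * s
      = (s + t : ℕ) * (1 - (s + t : ℕ)) / 2 + (s + t : ℕ) * s + -(t : ℤ) := by
    push_cast
    have : ((s : ℤ) + t + 1) * (1 - (s + t + 1)) = (s + t) * (1 - (s + t)) - 2 * (s + t) := by ring
    have : ((s : ℤ) + t + 1) * s = (s + t) * s + s := by ring
    omega
  obtain ⟨a, ha⟩ : ∃ a, n - s - t = a + 1 := ⟨n - s - t - 1, by omega⟩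
  obtain ⟨b, hb⟩ : ∃ b, h - s - t = b + 1 := ⟨h - s - t - 1, by omega⟩
  obtain ⟨d, hd⟩ : ∃ d, c - t = d + 1 := ⟨c - t - 1, by omega⟩
  rw [Xnh_eq_inv_pow, Xnh_eq_inv_pow, he, zpow_add₀ (neg_ne_zero.2 hq₀), zpow_neg, zpow_natCast,
    ← inv_pow, ha, hb, hd, show n - (s + t) = a + 1 by omega, show n - (s + t + 1) = a by omega,
    show h - (s + t) = b + 1 by omega, show h - (s + t + 1) = b by omega,
    show c + s - (s + t) = d + 1 by omega, show c + s - (s + t + 1) = d by omega,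
    show s + t + 1 - s = t + 1 by omega, show s + t - s = t by omega,
    prod_Icc_succ_top (by omega), prod_Icc_succ_top (by omega), prod_Icc_succ_top (by omega),
    prod_Icc_succ_top (by omega)]
  have := one_sub_pow_ne_zero hx a.succ_ne_zero
  have := one_sub_pow_ne_zero hx b.succ_ne_zero
  have := one_sub_pow_ne_zero hx d.succ_ne_zero
  have := one_sub_pow_ne_zero hx t.succ_ne_zero
  have := hP a
  have := hP b
  have := hP d
  have := hP t
  -- without this, `field_simp` normalises `(-q)⁻¹` and the `zpow` and does not terminate in time
  generalize (-q)⁻¹ = x at *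
  generalize (-q) ^ _ = Z
  field_simp
  ring

lemma Xnh_div_Xnh (hq₀ : q ≠ 0) (hq : |q| ≠ 1) {n h c s t : ℕ} (htc : t ≤ c) (hth : s + t ≤ h)
    (htn : s + t ≤ n) :
    Xnh q n h c s (s + t) / Xnh q n h c s s = qTerm (-q)⁻¹ (n - s) (h - s) c t := by
  induction t with
  | zero => simp [Xnh_ne_zero hq₀ hq]
  | succ t ih =>
    rw [← add_assoc, Xnh_add_succ hq₀ hq (by omega) (by omega) (by omega), mul_div_assoc,
      ih (by omega) (by omega) (by omega), qTerm_succ]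

lemma sum_Icc_Xnh_div_Xnh (hq₀ : q ≠ 0) (hq : |q| ≠ 1) {n h c s : ℕ} (hsh : s ≤ h)
    (hn : min (s + c) h ≤ n) :
    ∑ i ∈ Icc s (min (s + c) h), Xnh q n h c s i / Xnh q n h c s s
      = ∑ t ∈ range (min c (h - s) + 1), qTerm (-q)⁻¹ (n - s) (h - s) c t := by
  rw [show min (s + c) h = s + min c (h - s) by omega, ← Ico_add_one_right_eq_Icc,
    sum_Ico_eq_sum_range, show s + min c (h - s) + 1 - s = min c (h - s) + 1 by omega]
  exact sum_congr rfl fun t ht ↦ by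
    rw [mem_range] at ht
    exact Xnh_div_Xnh hq₀ hq (by omega) (by omega) (by omega)

end Xnh

lemma zpow_neg_natCast_sub {K : Type*} [DivisionRing K] (a : K) {m n : ℕ} (h : n ≤ m) :
    a ^ (-((m : ℤ) - n)) = a⁻¹ ^ (m - n) := by
  rw [← Nat.cast_sub h, zpow_neg, zpow_natCast, inv_pow]

/-- Lemma 5.22.1 (equation (5.12.1)) of the paper. -/
theorem stmt_10 (q : ℝ) (hq : 1 < q) (n h c s : ℕ)
    (hs : s < h) (hh : h ≤ n) (hc : 1 ≤ c) (hsc : s + c ≤ n) :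
    ∑ i ∈ Finset.Icc s (min (s + c) h), Xnh q n h c s i / Xnh q n h c s s
      = (-q) ^ (-((h : ℤ) - (s : ℤ))) * (1 - (-q) ^ (-((n : ℤ) - (h : ℤ)))) /
          (1 - (-q) ^ (-((n : ℤ) - (s : ℤ)))) *
        ∑ i ∈ Finset.Icc s (min (s + c - 1) h),
          Xnh q (n - 1) h (c - 1) s i / Xnh q (n - 1) h (c - 1) s s := by
  have hq₀ : q ≠ 0 := by positivity
  have hq₁ : |q| ≠ 1 := by rw [abs_of_pos (by positivity)]; exact hq.ne'
  obtain ⟨c, rfl⟩ : ∃ c', c = c' + 1 := ⟨c - 1, by omega⟩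
  obtain ⟨N, hN⟩ : ∃ N, n - s = N + 1 := ⟨n - s - 1, by omega⟩
  rw [sum_Icc_Xnh_div_Xnh hq₀ hq₁ hs.le ((min_le_right _ _).trans hh), Nat.add_sub_cancel,
    ← add_assoc, Nat.add_sub_cancel, sum_Icc_Xnh_div_Xnh (n := n - 1) hq₀ hq₁ hs.le (by omega),
    zpow_neg_natCast_sub _ hs.le, zpow_neg_natCast_sub _ hh,
    zpow_neg_natCast_sub _ (hs.le.trans hh),
    show n - 1 - s = N by omega, hN, show n - h = N + 1 - (h - s) by omega]
  exact sum_qTerm_succ N (h - s) c (not_isOfFinOrder_inv_neg hq₁) (by omega) (by omega)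
end

section
/- Let q > 1 be a real number, n ≥ 1 and 0 ≤ i ≤ n-1 integers. Define coefficients k_{i,0}, …, k_{i,i} by ∏_{l=1}^{i}(1 + (-q)^{-l} X) = ∑_{j=0}^{i} k_{i,j} X^j. Then the polynomial identity X · ∏_{l=i+2}^{n}(1 - (-q)^{-l} X) = ∑_{j=0}^{i} k_{i,j} (-q)^{-j(j+1)/2} · X^{j+1} · ∏_{l=j+2}^{n}(1 - (-q)^{-l} X) holds in ℝ[X] (equivalently, for all real X). -/
/-- Canonical Gaussian-type coefficients: `∏_{l=1}^i (1 + t^l X) = ∑_j myc t i j X^j`. -/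
def myc (t : ℝ) : ℕ → ℕ → ℝ
  | 0, 0 => 1
  | 0, _ + 1 => 0
  | i + 1, 0 => myc t i 0
  | i + 1, j + 1 => myc t i (j + 1) + t ^ (i + 1) * myc t i j

lemma myc_eq_zero (t : ℝ) : ∀ i j, i < j → myc t i j = 0 := by
  intro i
  induction i with
  | zero => intro j hj; cases j with
    | zero => omega
    | succ j => simp [myc]
  | succ i ih =>
    intro j hj
    cases j with
    | zero => omega
    | succ j =>
      have h1 : myc t i (j + 1) = 0 := ih (j + 1) (by omega)
      have h2 : myc t i j = 0 := ih j (by omega)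
      simp [myc, h1, h2]

lemma myc_expand (t : ℝ) (i j : ℕ) :
    myc t (i + 1) j = myc t i j + t ^ (i + 1) * (if j = 0 then 0 else myc t i (j - 1)) := by
  cases j with
  | zero => simp [myc]
  | succ j => simp [myc]

/-- Expansion of the product, with canonical coefficients. -/
lemma prodA (t : ℝ) (i : ℕ) (X : ℝ) :
    ∏ l ∈ Finset.Icc 1 i, (1 + t ^ l * X)
      = ∑ j ∈ Finset.range (i + 1), myc t i j * X ^ j := by
  induction i with
  | zero => simp [myc]
  | succ i ih =>
    rw [Finset.prod_Icc_succ_top (by omega), ih]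
    have hsplit : ∑ j ∈ Finset.range (i + 2), myc t (i + 1) j * X ^ j
        = (∑ j ∈ Finset.range (i + 2), myc t i j * X ^ j)
          + ∑ j ∈ Finset.range (i + 2),
              t ^ (i + 1) * (if j = 0 then 0 else myc t i (j - 1)) * X ^ j := by
      rw [← Finset.sum_add_distrib]
      refine Finset.sum_congr rfl fun j _ => ?_
      rw [myc_expand]; ring
    rw [hsplit]
    have h1 : ∑ j ∈ Finset.range (i + 2), myc t i j * X ^ j
        = ∑ j ∈ Finset.range (i + 1), myc t i j * X ^ j := by
      rw [Finset.sum_range_succ, myc_eq_zero t i (i + 1) (by omega)]; ring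
    have h2 : ∑ j ∈ Finset.range (i + 2),
          t ^ (i + 1) * (if j = 0 then 0 else myc t i (j - 1)) * X ^ j
        = t ^ (i + 1) * X * ∑ j ∈ Finset.range (i + 1), myc t i j * X ^ j := by
      rw [Finset.sum_range_succ']
      simp only [Nat.succ_ne_zero, if_false, if_true, Nat.add_sub_cancel,
        Finset.mul_sum, reduceIte]
      simp only [mul_zero, zero_mul, add_zero]
      exact Finset.sum_congr rfl fun j _ => by ring
    rw [h1, h2]
    ring

/-- Shift of product index. -/
lemma prod_shift (t X : ℝ) (a n : ℕ) (hn : 1 ≤ n) :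
    ∏ l ∈ Finset.Icc a (n - 1), (1 - t ^ l * (t * X))
      = ∏ l ∈ Finset.Icc (a + 1) n, (1 - t ^ l * X) := by
  have h : Finset.Icc (a + 1) n = (Finset.Icc a (n - 1)).map (addRightEmbedding 1) := by
    rw [Finset.map_add_right_Icc]
    congr 1
    omega
  rw [h, Finset.prod_map]
  refine Finset.prod_congr rfl fun l _ => ?_
  simp [addRightEmbedding, pow_succ]
  ring

/-- The key Rothe-type identity with canonical coefficients. -/
lemma keyB (t : ℝ) : ∀ i n, i + 1 ≤ n → ∀ X : ℝ,
    X * ∏ l ∈ Finset.Icc (i + 2) n, (1 - t ^ l * X)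
      = ∑ j ∈ Finset.range (i + 1),
          myc t i j * t ^ (j * (j + 1) / 2) * X ^ (j + 1) *
            ∏ l ∈ Finset.Icc (j + 2) n, (1 - t ^ l * X) := by
  intro i
  induction i with
  | zero =>
    intro n hn X
    simp [myc]
  | succ i ih =>
    intro n hn X
    -- split the sum using the recursion for myc
    have hsplit : ∑ j ∈ Finset.range (i + 2),
          myc t (i + 1) j * t ^ (j * (j + 1) / 2) * X ^ (j + 1) *
            ∏ l ∈ Finset.Icc (j + 2) n, (1 - t ^ l * X)
        = (∑ j ∈ Finset.range (i + 2),
            myc t i j * t ^ (j * (j + 1) / 2) * X ^ (j + 1) *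
              ∏ l ∈ Finset.Icc (j + 2) n, (1 - t ^ l * X))
          + ∑ j ∈ Finset.range (i + 2),
              t ^ (i + 1) * (if j = 0 then 0 else myc t i (j - 1)) *
                t ^ (j * (j + 1) / 2) * X ^ (j + 1) *
                ∏ l ∈ Finset.Icc (j + 2) n, (1 - t ^ l * X) := by
      rw [← Finset.sum_add_distrib]
      refine Finset.sum_congr rfl fun j _ => ?_
      rw [myc_expand]; ring
    rw [hsplit]
    -- first sum is the identity at level i
    have h1 : ∑ j ∈ Finset.range (i + 2),
          myc t i j * t ^ (j * (j + 1) / 2) * X ^ (j + 1) *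
            ∏ l ∈ Finset.Icc (j + 2) n, (1 - t ^ l * X)
        = X * ∏ l ∈ Finset.Icc (i + 2) n, (1 - t ^ l * X) := by
      rw [Finset.sum_range_succ, myc_eq_zero t i (i + 1) (by omega)]
      rw [← ih n (by omega) X]
      ring
    rw [h1]
    -- second sum: reindex and use the identity at level i with n-1 and t*X
    have hIH := ih (n - 1) (by omega) (t * X)
    have hIHl : t * X * ∏ l ∈ Finset.Icc (i + 2) (n - 1), (1 - t ^ l * (t * X))
        = t * X * ∏ l ∈ Finset.Icc (i + 3) n, (1 - t ^ l * X) := by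
      rw [prod_shift t X (i + 2) n (by omega)]
    have h2 : ∑ j ∈ Finset.range (i + 2),
          t ^ (i + 1) * (if j = 0 then 0 else myc t i (j - 1)) *
            t ^ (j * (j + 1) / 2) * X ^ (j + 1) *
            ∏ l ∈ Finset.Icc (j + 2) n, (1 - t ^ l * X)
        = t ^ (i + 1) * X * (t * X * ∏ l ∈ Finset.Icc (i + 3) n, (1 - t ^ l * X)) := by
      rw [Finset.sum_range_succ']
      simp only [Nat.add_sub_cancel]
      simp only [show ∀ x : ℕ, (x + 1 = 0) = False from fun x => by simp, if_false, if_true,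
        show (0 = 0) = True from by simp]
      rw [← hIHl, hIH, Finset.mul_sum]
      simp only [mul_zero, zero_mul, add_zero]
      refine Finset.sum_congr rfl fun j _ => ?_
      rw [prod_shift t X (j + 2) n (by omega)]
      have hTj : (j + 1) * (j + 1 + 1) / 2 = j * (j + 1) / 2 + (j + 1) := by
        obtain ⟨m, hm⟩ := Nat.even_mul_succ_self j
        have h2 : (j + 1) * (j + 1 + 1) = j * (j + 1) + 2 * (j + 1) := by ring
        omega
      rw [hTj, pow_add, mul_pow]
      ring
    rw [h2]
    -- peel off the bottom factor of the product on the left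
    have hins : Finset.Icc (i + 2) n = insert (i + 2) (Finset.Icc (i + 3) n) := by
      ext l
      simp only [Finset.mem_Icc, Finset.mem_insert]
      omega
    rw [hins, Finset.prod_insert (by simp)]
    ring

/-- Coefficient extraction from an identity of polynomial functions. -/
lemma coeff_ext (m : ℕ) (a b : ℕ → ℝ)
    (h : ∀ X : ℝ, ∑ j ∈ Finset.range m, a j * X ^ j
          = ∑ j ∈ Finset.range m, b j * X ^ j) :
    ∀ j < m, a j = b j := by
  intro j hj
  set p : Polynomial ℝ := ∑ j ∈ Finset.range m, Polynomial.C (a j) * Polynomial.X ^ j with hp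
  set p' : Polynomial ℝ := ∑ j ∈ Finset.range m, Polynomial.C (b j) * Polynomial.X ^ j with hp'
  have hpq : p = p' := by
    apply Polynomial.funext
    intro r
    simp only [hp, hp', Polynomial.eval_finset_sum, Polynomial.eval_mul,
      Polynomial.eval_C, Polynomial.eval_pow, Polynomial.eval_X]
    exact h r
  have hcoeff : ∀ c : ℕ → ℝ,
      (∑ j ∈ Finset.range m, Polynomial.C (c j) * Polynomial.X ^ j).coeff j = c j := by
    intro c
    rw [Polynomial.finset_sum_coeff]
    rw [Finset.sum_eq_single j]
    · simp
    · intro l _ hl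
      simp [Polynomial.coeff_X_pow, (Ne.symm hl)]
    · intro hjm; exact absurd (Finset.mem_range.mpr hj) hjm
  have := congrArg (fun P : Polynomial ℝ => P.coeff j) hpq
  simpa [hp, hp', hcoeff] using this

/-- Identity (5.52) of the paper: a Rothe-type q-identity. -/
theorem stmt_11 (q : ℝ) (hq : 1 < q) (n i : ℕ) (hn : 1 ≤ n) (hi : i ≤ n - 1)
    (k : ℕ → ℝ)
    (hk : ∀ X : ℝ, ∏ l ∈ Finset.Icc 1 i, (1 + (-q) ^ (-(l : ℤ)) * X)
          = ∑ j ∈ Finset.range (i + 1), k j * X ^ j) :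
    ∀ X : ℝ,
      X * ∏ l ∈ Finset.Icc (i + 2) n, (1 - (-q) ^ (-(l : ℤ)) * X)
        = ∑ j ∈ Finset.range (i + 1),
            k j * (-q) ^ (-((j : ℤ) * ((j : ℤ) + 1) / 2)) * X ^ (j + 1) *
              ∏ l ∈ Finset.Icc (j + 2) n, (1 - (-q) ^ (-(l : ℤ)) * X) := by
  intro X
  set t : ℝ := (-q)⁻¹ with htdef
  have ht : ∀ l : ℕ, (-q) ^ (-(l : ℤ)) = t ^ l := by
    intro l
    rw [zpow_neg, zpow_natCast, inv_pow]
  have hT : ∀ j : ℕ, (-q) ^ (-((j : ℤ) * ((j : ℤ) + 1) / 2)) = t ^ (j * (j + 1) / 2) := by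
    intro j
    have hcast : ((j : ℤ) * ((j : ℤ) + 1) / 2) = ((j * (j + 1) / 2 : ℕ) : ℤ) := by
      have : ((j * (j + 1) : ℕ) : ℤ) / 2 = ((j * (j + 1) / 2 : ℕ) : ℤ) := by
        omega
      rw [← this]
      push_cast
      ring_nf
    rw [hcast, zpow_neg, zpow_natCast, inv_pow]
  -- identify k with myc
  have hkmyc : ∀ j < i + 1, k j = myc t i j := by
    apply coeff_ext
    intro Y
    rw [← hk Y]
    rw [show (∏ l ∈ Finset.Icc 1 i, (1 + (-q) ^ (-(l : ℤ)) * Y))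
        = ∏ l ∈ Finset.Icc 1 i, (1 + t ^ l * Y) from
      Finset.prod_congr rfl fun l _ => by rw [ht l]]
    exact prodA t i Y
  -- rewrite everything in terms of t and apply keyB
  have hprod : ∀ a : ℕ, (∏ l ∈ Finset.Icc a n, (1 - (-q) ^ (-(l : ℤ)) * X))
      = ∏ l ∈ Finset.Icc a n, (1 - t ^ l * X) :=
    fun a => Finset.prod_congr rfl fun l _ => by rw [ht l]
  rw [hprod]
  rw [keyB t i n (by omega) X]
  refine Finset.sum_congr rfl fun j hj => ?_
  rw [hkmyc j (Finset.mem_range.mp hj), hT j, hprod]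
end

section
/- Let q > 1 be a real number, n ≥ 1 and 0 ≤ i ≤ n-1 integers. Define coefficients k_{i,0}, …, k_{i,i} by ∏_{l=1}^{i}(1 + (-q)^{-l} X) = ∑_{j=0}^{i} k_{i,j} X^j. Then the polynomial identity X · ∏_{l=i+1}^{n-1}(1 - (-q)^{-l} X) = ∑_{j=0}^{i} k_{i,j} (-q)^{-j(j-1)/2} · X^{j+1} · ∏_{l=j+1}^{n-1}(1 - (-q)^{-l} X) holds in ℝ[X]. -/
open Finset

/-- Coefficients of `∏_{l=1}^i (1 + a^l X)`. -/
noncomputable def Kc (a : ℝ) : ℕ → ℕ → ℝ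
  | 0, 0 => 1
  | 0, _ + 1 => 0
  | i + 1, 0 => Kc a i 0
  | i + 1, j + 1 => Kc a i (j + 1) + a ^ (i + 1) * Kc a i j

lemma Kc_eq_zero (a : ℝ) : ∀ i j, i < j → Kc a i j = 0 := by
  intro i
  induction i with
  | zero => intro j hj; match j, hj with | j + 1, _ => rfl
  | succ i ih =>
    intro j hj
    match j, hj with
    | j + 1, hj =>
      show Kc a i (j + 1) + a ^ (i + 1) * Kc a i j = 0
      rw [ih _ (by omega), ih _ (by omega)]; ring

lemma Kc_prod (a : ℝ) : ∀ i, ∀ X : ℝ,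
    ∏ l ∈ Icc 1 i, (1 + a ^ l * X) = ∑ j ∈ range (i + 1), Kc a i j * X ^ j := by
  intro i
  induction i with
  | zero => intro X; simp [Kc]
  | succ i ih =>
    intro X
    rw [← Finset.Ico_add_one_right_eq_Icc, Finset.prod_Ico_succ_top (by omega), Finset.Ico_add_one_right_eq_Icc, ih]
    have expand : (∑ j ∈ range (i + 1), Kc a i j * X ^ j) * (1 + a ^ (i + 1) * X)
        = ∑ j ∈ range (i + 1), Kc a i j * X ^ j
          + ∑ j ∈ range (i + 1), a ^ (i + 1) * Kc a i j * X ^ (j + 1) := by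
      rw [mul_add, mul_one, Finset.sum_mul]
      congr 1
      apply Finset.sum_congr rfl
      intro j _; ring
    rw [expand]
    rw [Finset.sum_range_succ' (fun j => Kc a (i + 1) j * X ^ j)]
    have h1 : ∑ j ∈ range (i + 1), Kc a (i + 1) (j + 1) * X ^ (j + 1)
        = ∑ j ∈ range (i + 1), (Kc a i (j + 1) * X ^ (j + 1)
            + a ^ (i + 1) * Kc a i j * X ^ (j + 1)) := by
      apply Finset.sum_congr rfl
      intro j _
      show (Kc a i (j + 1) + a ^ (i + 1) * Kc a i j) * X ^ (j + 1) = _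
      ring
    rw [h1, Finset.sum_add_distrib]
    have h2 : ∑ j ∈ range (i + 1), Kc a i (j + 1) * X ^ (j + 1)
        = ∑ j ∈ range (i + 1), Kc a i j * X ^ j - Kc a i 0 * X ^ 0 := by
      rw [Finset.sum_range_succ (fun j => Kc a i (j + 1) * X ^ (j + 1)) i,
        Finset.sum_range_succ' (fun j => Kc a i j * X ^ j) i,
        Kc_eq_zero a i (i + 1) (by omega)]
      ring
    rw [h2]
    show _ = _ + Kc a (i+1) 0 * X ^ 0
    have hK0 : Kc a (i + 1) 0 = Kc a i 0 := rfl
    rw [hK0]; ring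

lemma shift_prod (a Y : ℝ) (s t : ℕ) :
    ∏ l ∈ Icc (s + 2) (t + 1), (1 - a ^ l * Y)
      = ∏ l ∈ Icc (s + 1) t, (1 - a ^ l * (a * Y)) := by
  have h : Icc (s + 2) (t + 1) = (Icc (s + 1) t).map (addLeftEmbedding 1) := by
    rw [Finset.map_add_left_Icc]
    congr 1 <;> omega
  rw [h, Finset.prod_map]
  apply Finset.prod_congr rfl
  intro l _
  simp only [addLeftEmbedding_apply]
  rw [pow_add, pow_one]; ring

/-- The key polynomial identity, by induction on `i` (uniform in `m` and `Y`). -/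
lemma Kc_main (a : ℝ) : ∀ i m, i ≤ m → ∀ Y : ℝ,
    ∏ l ∈ Icc (i + 1) m, (1 - a ^ l * Y)
      = ∑ j ∈ range (i + 1), Kc a i j * a ^ (j * (j - 1) / 2) * Y ^ j *
          ∏ l ∈ Icc (j + 1) m, (1 - a ^ l * Y) := by
  intro i
  induction i with
  | zero => intro m _ Y; simp [Kc]
  | succ i ih =>
    intro m him Y
    obtain ⟨m', rfl⟩ : ∃ m', m = m' + 1 := ⟨m - 1, by omega⟩
    rw [Finset.sum_range_succ'
      (fun j => Kc a (i + 1) j * a ^ (j * (j - 1) / 2) * Y ^ j *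
        ∏ l ∈ Icc (j + 1) (m' + 1), (1 - a ^ l * Y))]
    have hsplit : ∀ j, Kc a (i + 1) (j + 1) * a ^ ((j + 1) * (j + 1 - 1) / 2) * Y ^ (j + 1) *
          ∏ l ∈ Icc (j + 1 + 1) (m' + 1), (1 - a ^ l * Y)
        = Kc a i (j + 1) * a ^ ((j + 1) * ((j + 1) - 1) / 2) * Y ^ (j + 1) *
            ∏ l ∈ Icc ((j + 1) + 1) (m' + 1), (1 - a ^ l * Y)
          + a ^ (i + 1) * Y * (Kc a i j * a ^ (j * (j - 1) / 2) * (a * Y) ^ j *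
            ∏ l ∈ Icc (j + 1) m', (1 - a ^ l * (a * Y))) := by
      intro j
      have hre : ∏ l ∈ Icc (j + 1 + 1) (m' + 1), (1 - a ^ l * Y)
          = ∏ l ∈ Icc (j + 1) m', (1 - a ^ l * (a * Y)) := shift_prod a Y j m'
      have hpow : (j + 1) * j / 2 = j * (j - 1) / 2 + j := by
        rcases j with _ | j
        · simp
        · have h : (j + 2) * (j + 1) = (j + 1) * j + 2 * (j + 1) := by ring
          rw [h, Nat.add_mul_div_left _ _ (by norm_num : 0 < 2)]
          simp [Nat.succ_sub_one]
      have hK : Kc a (i + 1) (j + 1) = Kc a i (j + 1) + a ^ (i + 1) * Kc a i j := rfl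
      have hsimp : (j + 1) * (j + 1 - 1) / 2 = (j + 1) * j / 2 := by simp
      rw [hK, hsimp, hpow, pow_add, mul_pow, hre]
      ring
    rw [Finset.sum_congr rfl (fun j _ => hsplit j), Finset.sum_add_distrib, ← Finset.mul_sum,
      ← ih m' (by omega) (a * Y)]
    -- now combine the remaining sum with the j = 0 term via the IH at m' + 1
    have key : (∑ j ∈ range (i + 1),
          Kc a i (j + 1) * a ^ ((j + 1) * ((j + 1) - 1) / 2) * Y ^ (j + 1) *
            ∏ l ∈ Icc ((j + 1) + 1) (m' + 1), (1 - a ^ l * Y))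
        + Kc a (i + 1) 0 * a ^ (0 * (0 - 1) / 2) * Y ^ 0 *
            ∏ l ∈ Icc (0 + 1) (m' + 1), (1 - a ^ l * Y)
        = ∏ l ∈ Icc (i + 1) (m' + 1), (1 - a ^ l * Y) := by
      rw [ih (m' + 1) (by omega) Y,
        Finset.sum_range_succ'
          (fun j => Kc a i j * a ^ (j * (j - 1) / 2) * Y ^ j *
            ∏ l ∈ Icc (j + 1) (m' + 1), (1 - a ^ l * Y)),
        Finset.sum_range_succ
          (fun j => Kc a i (j + 1) * a ^ ((j + 1) * ((j + 1) - 1) / 2) * Y ^ (j + 1) *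
            ∏ l ∈ Icc ((j + 1) + 1) (m' + 1), (1 - a ^ l * Y)) i,
        Kc_eq_zero a i (i + 1) (by omega)]
      have hK0 : Kc a (i + 1) 0 = Kc a i 0 := rfl
      rw [hK0]; ring
    have hQ : ∏ l ∈ Icc (i + 1) (m' + 1), (1 - a ^ l * Y)
        = (1 - a ^ (i + 1) * Y) * ∏ l ∈ Icc (i + 2) (m' + 1), (1 - a ^ l * Y) := by
      rw [← Finset.Ico_add_one_right_eq_Icc, Finset.prod_eq_prod_Ico_succ_bot (by omega), Finset.Ico_add_one_right_eq_Icc]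
    have hQ2 : ∏ l ∈ Icc (i + 1) m', (1 - a ^ l * (a * Y))
        = ∏ l ∈ Icc (i + 2) (m' + 1), (1 - a ^ l * Y) := (shift_prod a Y i m').symm
    show ∏ l ∈ Icc (i + 2) (m' + 1), (1 - a ^ l * Y) = _
    rw [hQ2]
    linear_combination - key - hQ
  
/-- Uniqueness of polynomial coefficients over ℝ. -/
lemma coeff_unique (n : ℕ) (c d : ℕ → ℝ)
    (h : ∀ x : ℝ, ∑ j ∈ range n, c j * x ^ j = ∑ j ∈ range n, d j * x ^ j) :
    ∀ j < n, c j = d j := by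
  intro j hj
  have hp : (∑ j ∈ range n, Polynomial.C (c j) * Polynomial.X ^ j)
      = ∑ j ∈ range n, Polynomial.C (d j) * Polynomial.X ^ j := by
    apply Polynomial.funext
    intro x
    simpa [Polynomial.eval_finset_sum] using h x
  have := congrArg (fun p => Polynomial.coeff p j) hp
  simpa [Polynomial.finset_sum_coeff, Polynomial.coeff_X_pow,
    Finset.sum_ite_eq' (range n), hj] using this

/-- Identity (5.53) of the paper, the companion of (5.52). -/
theorem stmt_12 (q : ℝ) (hq : 1 < q) (n i : ℕ) (hn : 1 ≤ n) (hi : i ≤ n - 1)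
    (k : ℕ → ℝ)
    (hk : ∀ X : ℝ, ∏ l ∈ Finset.Icc 1 i, (1 + (-q) ^ (-(l : ℤ)) * X)
          = ∑ j ∈ Finset.range (i + 1), k j * X ^ j) :
    ∀ X : ℝ,
      X * ∏ l ∈ Finset.Icc (i + 1) (n - 1), (1 - (-q) ^ (-(l : ℤ)) * X)
        = ∑ j ∈ Finset.range (i + 1),
            k j * (-q) ^ (-((j : ℤ) * ((j : ℤ) - 1) / 2)) * X ^ (j + 1) *
              ∏ l ∈ Finset.Icc (j + 1) (n - 1), (1 - (-q) ^ (-(l : ℤ)) * X) := by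
  intro X
  set a : ℝ := (-q)⁻¹ with ha
  have hconv : ∀ l : ℕ, (-q) ^ (-(l : ℤ)) = a ^ l := by
    intro l
    rw [zpow_neg, zpow_natCast, ← inv_pow]
  have hexp : ∀ j : ℕ, (-q) ^ (-((j : ℤ) * ((j : ℤ) - 1) / 2)) = a ^ (j * (j - 1) / 2) := by
    intro j
    have hcast : (j : ℤ) * ((j : ℤ) - 1) / 2 = ((j * (j - 1) / 2 : ℕ) : ℤ) := by
      have h1 : (j : ℤ) * ((j : ℤ) - 1) = ((j * (j - 1) : ℕ) : ℤ) := by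
        rcases j with _ | j
        · simp
        · push_cast [Nat.succ_sub_one]; ring
      rw [h1]
      omega
    rw [hcast, zpow_neg, zpow_natCast, ← inv_pow]
  have hkK : ∀ j < i + 1, k j = Kc a i j := by
    apply coeff_unique
    intro x
    rw [← hk x, ← Kc_prod a i x]
    apply Finset.prod_congr rfl
    intro l _
    rw [hconv]
  have main := Kc_main a i (n - 1) hi X
  calc X * ∏ l ∈ Finset.Icc (i + 1) (n - 1), (1 - (-q) ^ (-(l : ℤ)) * X)
      = X * ∏ l ∈ Finset.Icc (i + 1) (n - 1), (1 - a ^ l * X) := by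
        congr 1; exact Finset.prod_congr rfl fun l _ => by rw [hconv]
    _ = X * ∑ j ∈ range (i + 1), Kc a i j * a ^ (j * (j - 1) / 2) * X ^ j *
          ∏ l ∈ Icc (j + 1) (n - 1), (1 - a ^ l * X) := by rw [main]
    _ = _ := by
        rw [Finset.mul_sum]
        apply Finset.sum_congr rfl
        intro j hj
        rw [hkK j (Finset.mem_range.mp hj), hexp, pow_succ]
        have hpr : ∏ l ∈ Icc (j + 1) (n - 1), (1 - (-q) ^ (-(l : ℤ)) * X)
            = ∏ l ∈ Icc (j + 1) (n - 1), (1 - a ^ l * X) :=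
          Finset.prod_congr rfl fun l _ => by rw [hconv]
        rw [hpr]; ring
end

section
/- Let q > 1 be a real number and N ≥ 1 an integer. Then the polynomial identity ∑_{k=0}^{N-1} (-1)^k (-q)^{-k(k-1)/2} · ∏_{l=1, l ≠ N-k}^{N}(1 - (-q)^{-l} X) / [ ∏_{l=1}^{N-k-1}(1 - (-q)^{-l}) · ∏_{l=1}^{k}(1 - (-q)^{-l}) ] = (-1)^{N-1} (-q)^{-N(N-1)/2} X^{N-1} holds in ℝ[X] (equivalently for all real X). -/
/-!
Write `t = -q`. Both sides are polynomials in `X` of degree `< N`, so it suffices that they agree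
at the `N` distinct nodes `X = t ^ m`, `1 ≤ m ≤ N`. There every summand except `k = N - m`
contains the vanishing factor `1 - t⁻ᵐ tᵐ`, and in the surviving one the numerator
`∏_{l ≠ m} (1 - t^(m - l))` equals `(-1)^(m-1) t^(m(m-1)/2) (t⁻¹; t⁻¹)_(m-1) (t⁻¹; t⁻¹)_(N-m)`:
the two Pochhammer symbols cancel the denominator and what is left is the right-hand side at `tᵐ`.
-/

open Finset Polynomial

namespace QVandermonde

variable {K : Type*} [Field K] {t : K}

/-- `qPoch t n` is the q-Pochhammer symbol `(t⁻¹; t⁻¹)_n`. -/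
def qPoch (t : K) (n : ℕ) : K := ∏ l ∈ Icc 1 n, (1 - t ^ (-(l : ℤ)))

lemma qPoch_ne_zero {n : ℕ} (ht : ∀ j, 0 < j → j ≤ n → t ^ j ≠ 1) : qPoch t n ≠ 0 := by
  refine prod_ne_zero_iff.mpr fun l hl => sub_ne_zero.mpr ?_
  rw [mem_Icc] at hl
  rw [zpow_neg, zpow_natCast, ne_comm, inv_ne_one]
  exact ht l hl.1 hl.2

lemma qPoch_succ (t : K) (n : ℕ) :
    qPoch t (n + 1) = qPoch t n * (1 - t ^ (-((n + 1 : ℕ) : ℤ))) :=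
  prod_Icc_succ_top (by omega) _

lemma prod_Icc_one_sub_pow (ht0 : t ≠ 0) (n : ℕ) :
    ∏ j ∈ Icc 1 n, (1 - t ^ j) = (-1) ^ n * t ^ ((n + 1).choose 2) * qPoch t n := by
  induction n with
  | zero => simp [qPoch]
  | succ n ih =>
    have hfactor : 1 - t ^ (n + 1) = -t ^ (n + 1) * (1 - t ^ (-((n + 1 : ℕ) : ℤ))) := by
      rw [zpow_neg, zpow_natCast]
      field_simp
      ring
    rw [prod_Icc_succ_top (by omega), ih, qPoch_succ, hfactor,
      Nat.choose_succ_succ (n + 1) 1, Nat.choose_one_right, pow_add]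
    ring

lemma prod_Icc_one_sub_zpow_mul_pow_reflect (ht0 : t ≠ 0) (a : ℕ) :
    ∏ l ∈ Icc 1 a, (1 - t ^ (-(l : ℤ)) * t ^ (a + 1)) = ∏ j ∈ Icc 1 a, (1 - t ^ j) := by
  refine prod_nbij' (fun l => a + 1 - l) (fun j => a + 1 - j) ?_ ?_ ?_ ?_ fun l hl => ?_
  iterate 4 exact fun l hl => by simp only [mem_Icc] at hl ⊢; omega
  rw [mem_Icc] at hl
  rw [zpow_neg, zpow_natCast, pow_sub₀ t ht0 (by omega), mul_comm]

lemma prod_Icc_one_sub_zpow_mul_pow_shift (ht0 : t ≠ 0) (a b : ℕ) :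
    ∏ l ∈ Icc (a + 2) (a + 1 + b), (1 - t ^ (-(l : ℤ)) * t ^ (a + 1)) = qPoch t b := by
  rw [show a + 2 = 1 + (a + 1) by omega, show a + 1 + b = b + (a + 1) by omega,
    ← map_add_right_Icc, prod_map, qPoch]
  refine prod_congr rfl fun l _ => ?_
  rw [addRightEmbedding_apply, ← zpow_natCast, ← zpow_add₀ ht0]
  push_cast
  ring_nf

lemma prod_erase_one_sub_zpow_mul_pow (ht0 : t ≠ 0) (a b : ℕ) :
    ∏ l ∈ (Icc 1 (a + 1 + b)).erase (a + 1), (1 - t ^ (-(l : ℤ)) * t ^ (a + 1)) =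
      (-1) ^ a * t ^ ((a + 1).choose 2) * qPoch t a * qPoch t b := by
  have hsplit : (Icc 1 (a + 1 + b)).erase (a + 1) = Icc 1 a ∪ Icc (a + 2) (a + 1 + b) := by
    ext l; simp only [mem_erase, mem_Icc, mem_union]; omega
  have hdisj : Disjoint (Icc 1 a) (Icc (a + 2) (a + 1 + b)) :=
    disjoint_left.mpr fun l h1 h2 => by simp only [mem_Icc] at h1 h2; omega
  rw [hsplit, prod_union hdisj, prod_Icc_one_sub_zpow_mul_pow_reflect ht0,
    prod_Icc_one_sub_pow ht0, prod_Icc_one_sub_zpow_mul_pow_shift ht0]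

noncomputable def lagrangeSum (t : K) (N : ℕ) : K[X] :=
  ∑ k ∈ range N,
    C ((-1) ^ k * t ^ (-((k : ℤ) * ((k : ℤ) - 1) / 2)) / (qPoch t (N - k - 1) * qPoch t k)) *
      ∏ l ∈ (Icc 1 N).erase (N - k), (1 - C (t ^ (-(l : ℤ))) * X)

lemma eval_lagrangeSum (t x : K) (N : ℕ) :
    (lagrangeSum t N).eval x =
      ∑ k ∈ range N, (-1) ^ k * t ^ (-((k : ℤ) * ((k : ℤ) - 1) / 2)) *
        (∏ l ∈ (Icc 1 N).erase (N - k), (1 - t ^ (-(l : ℤ)) * x)) /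
          (qPoch t (N - k - 1) * qPoch t k) := by
  simp only [lagrangeSum, eval_finsetSum, eval_mul, eval_C, eval_prod, eval_sub, eval_one,
    eval_X, div_mul_eq_mul_div]

lemma natDegree_lagrangeSum_le (t : K) (N : ℕ) : (lagrangeSum t N).natDegree ≤ N - 1 := by
  refine natDegree_sum_le_of_forall_le _ _ fun k hk => ?_
  have hmem : N - k ∈ Icc 1 N := by simp only [mem_range, mem_Icc] at hk ⊢; omega
  refine (natDegree_C_mul_le _ _).trans <| (natDegree_prod_le _ _).trans <|
    (sum_le_card_nsmul _ _ 1 fun l _ => by compute_degree).trans_eq ?_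
  simp [card_erase_of_mem hmem]

lemma eval_lagrangeSum_pow (ht0 : t ≠ 0) {a b : ℕ}
    (ht : ∀ n, 0 < n → n < a + 1 + b → t ^ n ≠ 1) :
    (lagrangeSum t (a + 1 + b)).eval (t ^ (a + 1)) =
      (-1) ^ (a + b) * t ^ (-(((a + 1 + b : ℕ) : ℤ) * ((a + 1 + b : ℕ) - 1) / 2)) *
        (t ^ (a + 1)) ^ (a + b) := by
  rw [eval_lagrangeSum, sum_eq_single_of_mem b (by simp only [mem_range]; omega)]
  · rw [show a + 1 + b - b = a + 1 by omega, show a + 1 - 1 = a by omega,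
      prod_erase_one_sub_zpow_mul_pow ht0]
    have hPa : qPoch t a ≠ 0 := qPoch_ne_zero fun j hj hja => ht j hj (by omega)
    have hPb : qPoch t b ≠ 0 := qPoch_ne_zero fun j hj hjb => ht j hj (by omega)
    have hchoose : (((a + 1).choose 2 : ℕ) : ℤ) * 2 = (a + 1) * a := by
      exact_mod_cast Nat.choose_two_right (a + 1) ▸
        Nat.div_mul_cancel (Nat.even_mul_pred_self _).two_dvd
    have hexp : -((b : ℤ) * (b - 1) / 2) + (a + 1).choose 2 =
        -(((a + 1 + b : ℕ) : ℤ) * ((a + 1 + b : ℕ) - 1) / 2) + (a + 1) * (a + b) := by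
      have h2 (n : ℤ) : 2 * (n * (n - 1) / 2) = n * (n - 1) :=
        Int.two_mul_ediv_two_of_even (Int.even_mul_pred_self n)
      apply mul_left_cancel₀ (two_ne_zero : (2 : ℤ) ≠ 0)
      rw [mul_add, mul_add, mul_neg, mul_neg, h2, h2]
      push_cast
      linear_combination hchoose
    have hpow : t ^ (-((b : ℤ) * (b - 1) / 2)) * t ^ (a + 1).choose 2 =
        t ^ (-(((a + 1 + b : ℕ) : ℤ) * ((a + 1 + b : ℕ) - 1) / 2)) * (t ^ (a + 1)) ^ (a + b) := by
      rw [← pow_mul, ← zpow_natCast, ← zpow_natCast t ((a + 1) * (a + b)), ← zpow_add₀ ht0,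
        ← zpow_add₀ ht0, hexp]
      push_cast
      ring_nf
    calc _ = (-1) ^ (a + b) * (t ^ (-((b : ℤ) * (b - 1) / 2)) * t ^ (a + 1).choose 2) := by
          field_simp
          ring
      _ = _ := by rw [hpow, mul_assoc]
  · intro k hk hkb
    rw [prod_eq_zero (i := a + 1) (by simp only [mem_erase, mem_Icc, mem_range] at hk ⊢; omega)
      (by rw [zpow_neg, zpow_natCast, inv_mul_cancel₀ (pow_ne_zero _ ht0), sub_self]),
      mul_zero, zero_div]

lemma pow_injOn_Icc (ht0 : t ≠ 0) {N : ℕ} (ht : ∀ n, 0 < n → n < N → t ^ n ≠ 1) :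
    Set.InjOn (t ^ ·) (Icc 1 N : Set ℕ) := by
  intro i hi j hj hij
  by_contra hne
  wlog hlt : i < j generalizing i j
  · exact this hj hi hij.symm (Ne.symm hne) (by omega)
  simp only [coe_Icc, Set.mem_Icc] at hi hj
  refine ht (j - i) (by omega) (by omega) (mul_left_cancel₀ (pow_ne_zero i ht0) ?_)
  rw [← pow_add, Nat.add_sub_cancel' hlt.le, mul_one]
  exact hij.symm

theorem lagrangeSum_eq (ht0 : t ≠ 0) {N : ℕ} (hN : 1 ≤ N)
    (ht : ∀ n, 0 < n → n < N → t ^ n ≠ 1) :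
    lagrangeSum t N = C ((-1) ^ (N - 1) * t ^ (-((N : ℤ) * ((N : ℤ) - 1) / 2))) * X ^ (N - 1) := by
  classical
  have hcard : #((Icc 1 N).image (t ^ ·)) = N := by
    rw [card_image_of_injOn (pow_injOn_Icc ht0 ht), Nat.card_Icc, Nat.add_sub_cancel]
  have hdeg_lt {p : K[X]} (hp : p.natDegree ≤ N - 1) : p.degree < N :=
    (degree_le_of_natDegree_le hp).trans_lt (by exact_mod_cast Nat.sub_one_lt_of_lt hN)
  refine eq_of_degrees_lt_of_eval_finset_eq ((Icc 1 N).image (t ^ ·)) ?_ ?_ ?_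
  · rw [hcard]; exact hdeg_lt (natDegree_lagrangeSum_le t N)
  · rw [hcard]; exact hdeg_lt (natDegree_C_mul_X_pow_le _ _)
  · simp only [forall_mem_image, mem_Icc]
    rintro m ⟨hm1, hmN⟩
    obtain ⟨a, rfl⟩ : ∃ a, m = a + 1 := ⟨m - 1, by omega⟩
    obtain ⟨b, rfl⟩ : ∃ b, N = a + 1 + b := ⟨N - (a + 1), by omega⟩
    rw [eval_lagrangeSum_pow ht0 ht, eval_mul, eval_C, eval_pow, eval_X,
      show a + 1 + b - 1 = a + b by omega]

end QVandermonde

open QVandermonde in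
/-- Combination of (5.24) and (5.25) of the paper: the Vandermonde-inversion
polynomial identity equivalent to (5.23). -/
theorem stmt_15 (q : ℝ) (hq : 1 < q) (N : ℕ) (hN : 1 ≤ N) :
    ∀ X : ℝ,
      ∑ k ∈ Finset.range N,
        (-1 : ℝ) ^ k * (-q) ^ (-((k : ℤ) * ((k : ℤ) - 1) / 2)) *
          (∏ l ∈ (Finset.Icc 1 N).erase (N - k), (1 - (-q) ^ (-(l : ℤ)) * X)) /
          ((∏ l ∈ Finset.Icc 1 (N - k - 1), (1 - (-q) ^ (-(l : ℤ)))) *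
            (∏ l ∈ Finset.Icc 1 k, (1 - (-q) ^ (-(l : ℤ)))))
      = (-1 : ℝ) ^ (N - 1) * (-q) ^ (-((N : ℤ) * ((N : ℤ) - 1) / 2)) * X ^ (N - 1) := by
  intro X
  have hpow_ne_one (n : ℕ) (hn : 0 < n) : (-q) ^ n ≠ 1 := fun h =>
    (one_lt_pow₀ hq hn.ne').ne' <| by
      simpa [abs_pow, abs_of_pos (by linarith : 0 < q)] using congrArg abs h
  have h := congrArg (eval X)
    (lagrangeSum_eq (by linarith : -q ≠ 0) hN fun n hn _ => hpow_ne_one n hn)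
  rwa [eval_lagrangeSum, eval_mul, eval_C, eval_pow, eval_X] at h
end

section
/- Let q be an odd prime power, F_{q²} the field with q² elements, n ≥ 1 an integer, S a subset of {1, …, n}, β ∈ F_q, and μ = (μ_1, …, μ_n) ∈ F_{q²}^n. Suppose there exists an index k ∈ {1, …, n} with k ∉ S and μ_k ≠ 0. Then the number of ν = (ν_1, …, ν_n) ∈ F_{q²}^n satisfying ∑_{i∈S} ν_i^{q+1} + ∑_{i=1}^{n} (ν_i μ_i^q + ν_i^q μ_i) = β equals exactly q^{2n-1}. -/
open Finset Polynomial

lemma aux_char {q : ℕ} (hq : IsPrimePow q) {F : Type} [Field F] [Fintype F]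
    (hcard : Fintype.card F = q ^ 2) :
    ∃ p e : ℕ, p.Prime ∧ 0 < e ∧ q = p ^ e ∧ CharP F p := by
  obtain ⟨p, e, hp, he, rfl⟩ := hq
  have hp' : p.Prime := hp.nat_prime
  haveI : CharP F (ringChar F) := ringChar.charP F
  obtain ⟨m, hm, hFm⟩ := FiniteField.card F (ringChar F)
  refine ⟨p, e, hp', he, rfl, ?_⟩
  have h : (p ^ e) ^ 2 = ringChar F ^ (m : ℕ) := by rw [← hcard, hFm]
  have hdvd : p ∣ ringChar F ^ (m : ℕ) := by
    rw [← h]; exact dvd_pow (dvd_pow_self p he.ne') two_ne_zero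
  have := (Nat.Prime.dvd_of_dvd_pow hp' hdvd)
  have : p = ringChar F := ((Nat.prime_dvd_prime_iff_eq hp' hm).mp this)
  rw [this]; exact ringChar.charP F

lemma aux_roots_le {F : Type} [Field F] [Fintype F] [DecidableEq F]
    (P : F[X]) (hP : P ≠ 0) :
    (univ.filter fun x : F => P.eval x = 0).card ≤ P.natDegree := by
  have hsub : (univ.filter fun x : F => P.eval x = 0) ⊆ P.roots.toFinset := by
    intro x hx
    simp only [mem_filter, mem_univ, true_and] at hx
    simp [Polynomial.mem_roots, hP, hx, IsRoot]
  calc (univ.filter fun x : F => P.eval x = 0).card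
      ≤ P.roots.toFinset.card := card_le_card hsub
    _ ≤ Multiset.card P.roots := Multiset.toFinset_card_le _
    _ ≤ P.natDegree := P.card_roots'

lemma fiber_card {q : ℕ} (hq : IsPrimePow q) {F : Type} [Field F] [Fintype F]
    (hcard : Fintype.card F = q ^ 2) (μ : F) (hμ : μ ≠ 0) (c : F) (hc : c ^ q = c) :
    Nat.card {x : F // x * μ ^ q + x ^ q * μ = c} = q := by
  classical
  obtain ⟨p, e, hp, he, hqe, hFp⟩ := aux_char hq hcard
  haveI := hFp
  haveI : Fact p.Prime := ⟨hp⟩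
  have hq2 : 2 ≤ q := hq.two_le
  have hadd : ∀ a b : F, (a + b) ^ q = a ^ q + b ^ q := by
    intro a b; rw [hqe]; exact add_pow_char_pow a b p e
  have hpowcard : ∀ a : F, a ^ q ^ 2 = a := fun a => by
    rw [← hcard]; exact FiniteField.pow_card a
  have hqq : ∀ a : F, (a ^ q) ^ q = a := fun a => by
    rw [← pow_mul, ← sq]; exact hpowcard a
  set T : F →+ F := AddMonoidHom.mk' (fun x => x * μ ^ q + x ^ q * μ) (by
    intro a b; simp only [hadd]; ring) with hT
  have hTx : ∀ x : F, T x = x * μ ^ q + x ^ q * μ := fun _ => rfl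
  -- kernel card ≤ q
  have hker_card : Nat.card T.ker = (univ.filter fun x : F => T x = 0).card := by
    rw [Nat.card_eq_fintype_card, ← Fintype.card_subtype]
    exact Fintype.card_congr (Equiv.subtypeEquivRight fun x => AddMonoidHom.mem_ker)
  have hker_le : Nat.card T.ker ≤ q := by
    rw [hker_card]
    have hb := aux_roots_le (F := F) (C (μ ^ q) * X + C μ * X ^ q) (by
      intro h
      have h2 := congrArg (fun P => Polynomial.coeff P q) h
      simp only [coeff_add, coeff_C_mul, coeff_X_pow, coeff_X, coeff_zero] at h2
      rw [if_neg (show ¬(1 : ℕ) = q by omega)] at h2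
      simp only [if_true, mul_zero, mul_one, zero_add, eq_self_iff_true] at h2
      exact hμ h2)
    have hset : (univ.filter fun x : F => T x = 0)
        = (univ.filter fun x : F => (C (μ ^ q) * X + C μ * X ^ q).eval x = 0) := by
      ext x
      simp only [mem_filter, mem_univ, true_and, hTx, eval_add, eval_mul, eval_pow,
        eval_C, eval_X]
      constructor <;> intro h <;> linear_combination h
    rw [hset]
    refine le_trans hb ?_
    calc (C (μ ^ q) * X + C μ * X ^ q).natDegree
        ≤ max (C (μ ^ q) * X).natDegree (C μ * X ^ q).natDegree := natDegree_add_le _ _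
      _ ≤ q := by
          apply max_le
          · exact le_trans (natDegree_C_mul_le _ _) (by simp; omega)
          · exact le_trans (natDegree_C_mul_le _ _) (by simp)
  -- range ⊆ K, card K ≤ q
  set Kf : Finset F := univ.filter fun x : F => x ^ q = x with hKf
  have hK_le : Kf.card ≤ q := by
    have hb := aux_roots_le (F := F) (X ^ q - X) (by
      intro h
      have h2 := congrArg (fun P => Polynomial.coeff P q) h
      simp only [coeff_sub, coeff_X_pow, coeff_X, coeff_zero] at h2
      rw [if_neg (show ¬(1 : ℕ) = q by omega)] at h2
      norm_num at h2)
    have hset : Kf = (univ.filter fun x : F => (X ^ q - X : F[X]).eval x = 0) := by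
      ext x
      simp [hKf, sub_eq_zero]
    rw [hset]
    refine le_trans hb ?_
    calc (X ^ q - X : F[X]).natDegree
        ≤ max (X ^ q : F[X]).natDegree (X : F[X]).natDegree := natDegree_sub_le _ _
      _ ≤ q := by apply max_le <;> simp; omega
  have hrange_sub : ∀ x : F, T x ∈ Kf := by
    intro x
    simp only [hKf, mem_filter, mem_univ, true_and, hTx]
    rw [hadd, mul_pow, mul_pow, hqq, hqq]
    ring
  -- image as finset
  set Rf : Finset F := univ.image T with hRf
  have hrange_card : Nat.card T.range = Rf.card := by
    have h1 : (T.range : Set F) = (Rf : Set F) := by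
      ext x; simp [AddMonoidHom.mem_range, hRf, eq_comm]
    calc Nat.card T.range = Nat.card ((T.range : Set F)) := rfl
      _ = ((T.range : Set F)).ncard := Nat.card_coe_set_eq _
      _ = ((Rf : Set F)).ncard := by rw [h1]
      _ = Rf.card := Set.ncard_coe_finset _
  have hRsubK : Rf ⊆ Kf := by
    intro x hx
    simp only [hRf, mem_image, mem_univ, true_and] at hx
    obtain ⟨y, rfl⟩ := hx
    exact hrange_sub y
  -- product formula
  have hprod : Nat.card (F ⧸ T.ker) * Nat.card T.ker = q ^ 2 := by
    rw [← AddSubgroup.card_eq_card_quotient_mul_card_addSubgroup T.ker,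
      Nat.card_eq_fintype_card, hcard]
  have hquot : Nat.card (F ⧸ T.ker) = Nat.card T.range :=
    Nat.card_congr (QuotientAddGroup.quotientKerEquivRange T).toEquiv
  have hrange_le : Nat.card T.range ≤ q := by
    rw [hrange_card]; exact le_trans (card_le_card hRsubK) hK_le
  rw [hquot] at hprod
  have hq0 : 0 < q := lt_of_lt_of_le two_pos hq2
  have hker_eq : Nat.card T.ker = q := by
    refine le_antisymm hker_le ?_
    have h1 : q * q ≤ q * Nat.card T.ker := by
      calc q * q = q ^ 2 := (sq q).symm
        _ = Nat.card T.range * Nat.card T.ker := hprod.symm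
        _ ≤ q * Nat.card T.ker := Nat.mul_le_mul_right _ hrange_le
    exact Nat.le_of_mul_le_mul_left h1 hq0
  have hrange_eq : Nat.card T.range = q := by
    rw [hker_eq] at hprod
    have : Nat.card T.range * q = q * q := by rw [hprod, sq]
    exact Nat.eq_of_mul_eq_mul_right hq0 (by rw [this, Nat.mul_comm])
  -- c is in the range
  have hRK : Rf = Kf := by
    apply Finset.eq_of_subset_of_card_le hRsubK
    rw [← hrange_card, hrange_eq]
    exact hK_le
  have hcR : c ∈ Rf := by
    rw [hRK]; simp only [hKf, mem_filter, mem_univ, true_and]; exact hc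
  obtain ⟨x₀, _, hx₀⟩ := Finset.mem_image.mp hcR
  -- fiber equiv kernel
  have hequiv : {x : F // x * μ ^ q + x ^ q * μ = c} ≃ T.ker := by
    refine ⟨fun x => ⟨x.1 - x₀, ?_⟩, fun y => ⟨y.1 + x₀, ?_⟩, ?_, ?_⟩
    · rw [AddMonoidHom.mem_ker, map_sub, hx₀]
      have h2 : T x.1 = c := by rw [hTx]; exact x.2
      rw [h2, sub_self]
    · have hy := AddMonoidHom.mem_ker.mp y.2
      have h2 : T (y.1 + x₀) = c := by rw [map_add, hy, hx₀, zero_add]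
      rw [hTx] at h2; exact h2
    · intro x; ext; simp
    · intro y; ext; simp
  rw [Nat.card_congr hequiv, hker_eq]

/-- The key counting step in Proposition 5.36 of the paper: over `F_{q²}`,
the fiber of `ν ↦ ∑_{i∈S} ν_i^{q+1} + ∑_i Tr(ν_i μ_i^q)` over any `β ∈ F_q`
has size `q^{2n-1}` whenever some coordinate `k ∉ S` has `μ_k ≠ 0`. -/
theorem stmt_16 (q : ℕ) (hq : IsPrimePow q) (hodd : Odd q)
    (F : Type) [Field F] [Fintype F] (hcard : Fintype.card F = q ^ 2)
    (n : ℕ) (hn : 1 ≤ n) (S : Finset (Fin n)) (β : F) (hβ : β ^ q = β)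
    (μ : Fin n → F) (hμ : ∃ k : Fin n, k ∉ S ∧ μ k ≠ 0) :
    Nat.card {ν : Fin n → F //
        ∑ i ∈ S, ν i ^ (q + 1) + ∑ i, (ν i * μ i ^ q + ν i ^ q * μ i) = β}
      = q ^ (2 * n - 1) := by
  classical
  obtain ⟨k, hkS, hμk⟩ := hμ
  obtain ⟨p, e, hp, he, hqe, hFp⟩ := aux_char hq hcard
  haveI := hFp
  haveI : Fact p.Prime := ⟨hp⟩
  have hadd : ∀ a b : F, (a + b) ^ q = a ^ q + b ^ q := fun a b => by
    rw [hqe]; exact add_pow_char_pow a b p e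
  have hsub : ∀ a b : F, (a - b) ^ q = a ^ q - b ^ q := fun a b => by
    rw [sub_eq_add_neg, hadd, hodd.neg_pow, ← sub_eq_add_neg]
  have hpowcard : ∀ a : F, a ^ q ^ 2 = a := fun a => by
    rw [← hcard]; exact FiniteField.pow_card a
  set φ : F →+ F := AddMonoidHom.mk' (fun x => x ^ q) (fun a b => hadd a b) with hφ
  have hφx : ∀ x : F, φ x = x ^ q := fun _ => rfl
  set A : (Fin n → F) → F := fun ν =>
    ∑ i ∈ S, ν i ^ (q + 1) + ∑ i ∈ univ.erase k, (ν i * μ i ^ q + ν i ^ q * μ i) with hA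
  have hAν : ∀ ν : Fin n → F, A ν
      = ∑ i ∈ S, ν i ^ (q + 1) + ∑ i ∈ univ.erase k, (ν i * μ i ^ q + ν i ^ q * μ i) :=
    fun _ => rfl
  have hP : ∀ ν : Fin n → F,
      (∑ i ∈ S, ν i ^ (q + 1) + ∑ i, (ν i * μ i ^ q + ν i ^ q * μ i) = β)
      ↔ ν k * μ k ^ q + ν k ^ q * μ k = β - A ν := by
    intro ν
    rw [← Finset.add_sum_erase _ _ (mem_univ k), eq_sub_iff_add_eq, hAν]
    constructor <;> intro h <;> linear_combination h
  have hAq : ∀ ν : Fin n → F, (β - A ν) ^ q = β - A ν := by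
    intro ν
    rw [hsub, hβ]
    congr 1
    calc (A ν) ^ q
        = φ (∑ i ∈ S, ν i ^ (q + 1)) + φ (∑ i ∈ univ.erase k,
            (ν i * μ i ^ q + ν i ^ q * μ i)) := by rw [← map_add, hAν, hφx]
      _ = ∑ i ∈ S, φ (ν i ^ (q + 1)) + ∑ i ∈ univ.erase k,
            φ (ν i * μ i ^ q + ν i ^ q * μ i) := by rw [map_sum, map_sum]
      _ = A ν := by
          rw [hAν]
          congr 1
          · apply Finset.sum_congr rfl
            intro i _
            rw [hφx, ← pow_mul, show (q + 1) * q = q ^ 2 + q by ring, pow_add,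
              hpowcard, ← pow_succ']
          · apply Finset.sum_congr rfl
            intro i _
            have hqq : ∀ a : F, (a ^ q) ^ q = a := fun a => by
              rw [← pow_mul, ← sq]; exact hpowcard a
            rw [hφx, hadd, mul_pow, mul_pow, hqq, hqq]
            ring
  have hA_off : ∀ (x : F) (r : {j : Fin n // j ≠ k} → F),
      A ((Equiv.funSplitAt k F).symm (x, r)) = A ((Equiv.funSplitAt k F).symm (0, r)) := by
    intro x r
    rw [hAν, hAν]
    congr 1
    · apply Finset.sum_congr rfl
      intro i hi
      have hik : i ≠ k := fun h => hkS (h ▸ hi)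
      simp [Equiv.funSplitAt_symm_apply, hik]
    · apply Finset.sum_congr rfl
      intro i hi
      have hik : i ≠ k := (mem_erase.mp hi).1
      simp [Equiv.funSplitAt_symm_apply, hik]
  have hsymm_k : ∀ (x : F) (r : {j : Fin n // j ≠ k} → F),
      ((Equiv.funSplitAt k F).symm (x, r)) k = x := by
    intro x r
    simp [Equiv.funSplitAt_symm_apply]
  rw [Nat.card_eq_fintype_card, Fintype.card_subtype, Finset.card_filter,
    ← Equiv.sum_comp (Equiv.funSplitAt k F).symm, Fintype.sum_prod_type]
  have hinner : ∀ r : {j : Fin n // j ≠ k} → F,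
      (∑ x : F, if (∑ i ∈ S, ((Equiv.funSplitAt k F).symm (x, r)) i ^ (q + 1)
          + ∑ i, (((Equiv.funSplitAt k F).symm (x, r)) i * μ i ^ q
            + ((Equiv.funSplitAt k F).symm (x, r)) i ^ q * μ i) = β) then 1 else 0) = q := by
    intro r
    have hfib := fiber_card hq hcard (μ k) hμk
      (β - A ((Equiv.funSplitAt k F).symm (0, r))) (hAq _)
    rw [Nat.card_eq_fintype_card, Fintype.card_subtype, Finset.card_filter] at hfib
    have hiff : ∀ x : F, (∑ i ∈ S, ((Equiv.funSplitAt k F).symm (x, r)) i ^ (q + 1)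
          + ∑ i, (((Equiv.funSplitAt k F).symm (x, r)) i * μ i ^ q
            + ((Equiv.funSplitAt k F).symm (x, r)) i ^ q * μ i) = β)
        ↔ (x * μ k ^ q + x ^ q * μ k
            = β - A ((Equiv.funSplitAt k F).symm (0, r))) := by
      intro x
      rw [hP ((Equiv.funSplitAt k F).symm (x, r)), hsymm_k, hA_off]
    calc (∑ x : F, if (∑ i ∈ S, ((Equiv.funSplitAt k F).symm (x, r)) i ^ (q + 1)
          + ∑ i, (((Equiv.funSplitAt k F).symm (x, r)) i * μ i ^ q
            + ((Equiv.funSplitAt k F).symm (x, r)) i ^ q * μ i) = β) then 1 else 0)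
        = (∑ x : F, if (x * μ k ^ q + x ^ q * μ k
            = β - A ((Equiv.funSplitAt k F).symm (0, r))) then 1 else 0) :=
          Finset.sum_congr rfl fun x _ => if_congr (hiff x) rfl rfl
      _ = q := hfib
  calc (∑ x : F, ∑ r : {j : Fin n // j ≠ k} → F,
        if (∑ i ∈ S, ((Equiv.funSplitAt k F).symm (x, r)) i ^ (q + 1)
          + ∑ i, (((Equiv.funSplitAt k F).symm (x, r)) i * μ i ^ q
            + ((Equiv.funSplitAt k F).symm (x, r)) i ^ q * μ i) = β) then 1 else 0)
      = ∑ r : {j : Fin n // j ≠ k} → F, (q : ℕ) := by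
        rw [Finset.sum_comm]
        exact Finset.sum_congr rfl fun r _ => hinner r
    _ = Fintype.card ({j : Fin n // j ≠ k} → F) * q := by
        rw [Finset.sum_const, Finset.card_univ, smul_eq_mul]
    _ = q ^ (2 * n - 1) := by
        rw [Fintype.card_fun, hcard]
        have h1 : Fintype.card {j : Fin n // j ≠ k} = n - 1 := by
          rw [Fintype.card_subtype]
          rw [show (univ.filter fun j : Fin n => j ≠ k) = univ.erase k from by
            ext j; simp [Finset.mem_erase, and_comm]]
          rw [Finset.card_erase_of_mem (mem_univ k), Finset.card_univ, Fintype.card_fin]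
        rw [h1, ← pow_mul, ← pow_succ]
        congr 1
        omega
end
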